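/- If a nested sequent Γ ⊢ Δ is derivable in N-LBiI, then for any label x the labelled sequent ℓ(Γ ⊢ Δ; x) is derivable in L-LBiI. -/

import Mathlib

/-- BiInt formulas -/
inductive Form : Type
  | atom : ℕ → Form
  | top  : Form
  | bot  : Form
  | and  : Form → Form → Form
  | or   : Form → Form → Form
  | imp  : Form → Form → Form
  | excl : Form → Form → Form
  deriving DecidableEq

/-- Kripke structures for BiInt -/
structure Kripke where
  W : Type
  le : W → W → Prop
  le_refl : ∀ w, le w w
  le_trans : ∀ u v w, le u v → le v w → le u w
  nonempty : Nonempty W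
  I : W → Set ℕ
  mono : ∀ {w w'}, le w w' → I w ⊆ I w'

/-- truth of a formula at a world -/
def Kripke.force (K : Kripke) : K.W → Form → Prop
  | w, .atom p => p ∈ K.I w
  | _, .top => True
  | _, .bot => False
  | w, .and A B => K.force w A ∧ K.force w B
  | w, .or A B => K.force w A ∨ K.force w B
  | w, .imp A B => ∀ w', K.le w w' → K.force w' A → K.force w' B
  | w, .excl A B => ∃ w', K.le w' w ∧ K.force w' A ∧ ¬ K.force w' B

/-- validity of a sequent -/
def SeqValid (Γ Δ : Multiset Form) : Prop :=
  ∀ (K : Kripke) (w : K.W), (∀ A ∈ Γ, K.force w A) → ∃ A ∈ Δ, K.force w A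

/-- The standard-style sequent calculus LBiI; the boolean parameter tells whether
the cut rule is allowed (`LD false` is cut-free LBiI). -/
inductive LD : Bool → Multiset Form → Multiset Form → Prop
  | hyp (b) (A : Form) (Γ Δ) : LD b (A ::ₘ Γ) (A ::ₘ Δ)
  | cut {Γ Δ} (A : Form) : LD true Γ (A ::ₘ Δ) → LD true (A ::ₘ Γ) Δ → LD true Γ Δ
  | weakL {b Γ Δ} (A : Form) : LD b Γ Δ → LD b (A ::ₘ Γ) Δ
  | weakR {b Γ Δ} (A : Form) : LD b Γ Δ → LD b Γ (A ::ₘ Δ)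
  | contrL {b Γ Δ} {A : Form} : LD b (A ::ₘ A ::ₘ Γ) Δ → LD b (A ::ₘ Γ) Δ
  | contrR {b Γ Δ} {A : Form} : LD b Γ (A ::ₘ A ::ₘ Δ) → LD b Γ (A ::ₘ Δ)
  | topL {b Γ Δ} : LD b Γ Δ → LD b (Form.top ::ₘ Γ) Δ
  | topR (b Γ Δ) : LD b Γ (Form.top ::ₘ Δ)
  | botL (b Γ Δ) : LD b (Form.bot ::ₘ Γ) Δ
  | botR {b Γ Δ} : LD b Γ Δ → LD b Γ (Form.bot ::ₘ Δ)
  | andL {b Γ Δ A B} : LD b (A ::ₘ B ::ₘ Γ) Δ → LD b (Form.and A B ::ₘ Γ) Δ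
  | andR {b Γ Δ A B} : LD b Γ (A ::ₘ Δ) → LD b Γ (B ::ₘ Δ) → LD b Γ (Form.and A B ::ₘ Δ)
  | orL {b Γ Δ A B} : LD b (A ::ₘ Γ) Δ → LD b (B ::ₘ Γ) Δ → LD b (Form.or A B ::ₘ Γ) Δ
  | orR {b Γ Δ A B} : LD b Γ (A ::ₘ B ::ₘ Δ) → LD b Γ (Form.or A B ::ₘ Δ)
  | impL {b Γ Δ A B} : LD b (Form.imp A B ::ₘ Γ) (A ::ₘ Δ) → LD b (B ::ₘ Γ) Δ →
      LD b (Form.imp A B ::ₘ Γ) Δ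
  | impR {b Γ Δ A B} : LD b (A ::ₘ Γ) {B} → LD b Γ (Form.imp A B ::ₘ Δ)
  | exclL {b Γ Δ A B} : LD b {A} (B ::ₘ Δ) → LD b (Form.excl A B ::ₘ Γ) Δ
  | exclR {b Γ Δ A B} : LD b Γ (A ::ₘ Δ) → LD b (B ::ₘ Γ) (Form.excl A B ::ₘ Δ) →
      LD b Γ (Form.excl A B ::ₘ Δ)

/-- members of nested contexts: formulas or nested sequents -/
inductive NForm : Type
  | fm : Form → NForm
  | seq : List NForm → List NForm → NForm

mutual
  /-- deep equality of nested-context members up to permutation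
  (nested contexts are multisets) -/
  inductive NEq : NForm → NForm → Prop
    | fm (A : Form) : NEq (.fm A) (.fm A)
    | seq {Γ Γ' Δ Δ'} : CEq Γ Γ' → CEq Δ Δ' → NEq (.seq Γ Δ) (.seq Γ' Δ')
  /-- equality of nested contexts as multisets -/
  inductive CEq : List NForm → List NForm → Prop
    | nil : CEq [] []
    | cons {a b Γ Γ'} : NEq a b → CEq Γ Γ' → CEq (a :: Γ) (b :: Γ')
    | swap (a b : NForm) (Γ : List NForm) : CEq (a :: b :: Γ) (b :: a :: Γ)
    | trans {Γ Γ' Γ''} : CEq Γ Γ' → CEq Γ' Γ'' → CEq Γ Γ''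
end

/-- The nested sequent calculus N-LBiI; the boolean parameter tells whether
the cut rule is allowed. Nested contexts are lists identified up to `CEq`
(i.e. multisets), so there is an explicit exchange rule. -/
inductive ND : Bool → List NForm → List NForm → Prop
  | exch {b Γ Γ' Δ Δ'} : CEq Γ Γ' → CEq Δ Δ' → ND b Γ Δ → ND b Γ' Δ'
  | hyp (b) (A : Form) (Γ Δ) : ND b (.fm A :: Γ) (.fm A :: Δ)
  | cut {Γ Δ} (A : Form) : ND true Γ (.fm A :: Δ) → ND true (.fm A :: Γ) Δ → ND true Γ Δ
  | weakL {b Γ Δ} (A : Form) : ND b Γ Δ → ND b (.fm A :: Γ) Δ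
  | weakR {b Γ Δ} (A : Form) : ND b Γ Δ → ND b Γ (.fm A :: Δ)
  | contrL {b Γ Δ} {A : Form} : ND b (.fm A :: .fm A :: Γ) Δ → ND b (.fm A :: Γ) Δ
  | contrR {b Γ Δ} {A : Form} : ND b Γ (.fm A :: .fm A :: Δ) → ND b Γ (.fm A :: Δ)
  | topL {b Γ Δ} : ND b Γ Δ → ND b (.fm .top :: Γ) Δ
  | topR (b Γ Δ) : ND b Γ (.fm .top :: Δ)
  | botL (b Γ Δ) : ND b (.fm .bot :: Γ) Δ
  | botR {b Γ Δ} : ND b Γ Δ → ND b Γ (.fm .bot :: Δ)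
  | andL {b Γ Δ A B} : ND b (.fm A :: .fm B :: Γ) Δ → ND b (.fm (.and A B) :: Γ) Δ
  | andR {b Γ Δ A B} : ND b Γ (.fm A :: Δ) → ND b Γ (.fm B :: Δ) → ND b Γ (.fm (.and A B) :: Δ)
  | orL {b Γ Δ A B} : ND b (.fm A :: Γ) Δ → ND b (.fm B :: Γ) Δ → ND b (.fm (.or A B) :: Γ) Δ
  | orR {b Γ Δ A B} : ND b Γ (.fm A :: .fm B :: Δ) → ND b Γ (.fm (.or A B) :: Δ)
  | impL {b Γ Δ A B} : ND b (.fm (.imp A B) :: Γ) (.fm A :: Δ) → ND b (.fm B :: Γ) Δ →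
      ND b (.fm (.imp A B) :: Γ) Δ
  | impR {b Γ Δ A B} : ND b (.fm A :: Γ) [.fm B] → ND b Γ (.fm (.imp A B) :: Δ)
  | exclL {b Γ Δ A B} : ND b [.fm A] (.fm B :: Δ) → ND b (.fm (.excl A B) :: Γ) Δ
  | exclR {b Γ Δ A B} : ND b Γ (.fm A :: Δ) → ND b (.fm B :: Γ) (.fm (.excl A B) :: Δ) →
      ND b Γ (.fm (.excl A B) :: Δ)
  | nestL {b Γ Δ Γ₀ Δ₀} : ND b Γ₀ (Δ₀ ++ Δ) → ND b (.seq Γ₀ Δ₀ :: Γ) Δ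
  | nestR {b Γ Δ Γ₀ Δ₀} : ND b (Γ ++ Γ₀) Δ₀ → ND b Γ (.seq Γ₀ Δ₀ :: Δ)
  | unnestL {b Γ Δ Γ₀ Δ₀} : ND b (.seq Γ₀ Δ₀ :: Γ) Δ → ND b (Γ₀ ++ Γ) (Δ₀ ++ Δ)
  | unnestR {b Γ Δ Γ₀ Δ₀} : ND b Γ (.seq Γ₀ Δ₀ :: Δ) → ND b (Γ₀ ++ Γ) (Δ₀ ++ Δ)
/-- a finite directed graph with labels (nodes) drawn from ℕ -/
structure LGraph where
  nodes : Finset ℕ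
  arcs : Finset (ℕ × ℕ)

/-- renaming of a node in a graph (`G[y/x]`) -/
def LGraph.ren (G : LGraph) (x y : ℕ) : LGraph :=
  ⟨G.nodes.image (fun z => if z = x then y else z),
   G.arcs.image (fun a => ((if a.1 = x then y else a.1), (if a.2 = x then y else a.2)))⟩

/-- labelled contexts: multisets of labelled formulas -/
abbrev LCtx := Multiset (ℕ × Form)

/-- renaming of a label in a labelled context (`Γ[y/x]`) -/
def renC (Γ : LCtx) (x y : ℕ) : LCtx := Γ.map (fun a => ((if a.1 = x then y else a.1), a.2))

/-- wellformedness of a labelled sequent: all labels are nodes of the graph -/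
def Wf (G : LGraph) (Γ Δ : LCtx) : Prop :=
  (∀ a ∈ Γ, a.1 ∈ G.nodes) ∧ (∀ a ∈ Δ, a.1 ∈ G.nodes)

/-- The labelled sequent calculus L-LBiI; the boolean parameter tells whether
the cut rule is allowed. -/
inductive LDeriv : Bool → LGraph → LCtx → LCtx → Prop
  | hyp {G Γ Δ} (b) (x : ℕ) (A : Form) : Wf G Γ Δ → x ∈ G.nodes →
      LDeriv b G ((x, A) ::ₘ Γ) ((x, A) ::ₘ Δ)
  | cut {G Γ Δ} (x : ℕ) (A : Form) : x ∈ G.nodes →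
      LDeriv true G Γ ((x, A) ::ₘ Δ) → LDeriv true G ((x, A) ::ₘ Γ) Δ → LDeriv true G Γ Δ
  | weakL {b G Γ Δ} (x : ℕ) (A : Form) : x ∈ G.nodes → LDeriv b G Γ Δ →
      LDeriv b G ((x, A) ::ₘ Γ) Δ
  | weakR {b G Γ Δ} (x : ℕ) (A : Form) : x ∈ G.nodes → LDeriv b G Γ Δ →
      LDeriv b G Γ ((x, A) ::ₘ Δ)
  | contrL {b G Γ Δ x A} : LDeriv b G ((x, A) ::ₘ (x, A) ::ₘ Γ) Δ → LDeriv b G ((x, A) ::ₘ Γ) Δ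
  | contrR {b G Γ Δ x A} : LDeriv b G Γ ((x, A) ::ₘ (x, A) ::ₘ Δ) → LDeriv b G Γ ((x, A) ::ₘ Δ)
  /-- `nodesplit U`: the conclusion graph is `G₀ ⋈y (y,x) ⋈x G`,
  the premise graph is `G₀ ⋈y G[y/x]`, with proviso `↓G x` -/
  | nodesplitU {b Γ Δ} (G₀ G : LGraph) (x y : ℕ) :
      y ∈ G₀.nodes → x ∈ G.nodes → G₀.nodes ∩ G.nodes = ∅ →
      (∀ z, (z, x) ∉ G.arcs) →
      LDeriv b ⟨G₀.nodes ∪ (G.ren x y).nodes, G₀.arcs ∪ (G.ren x y).arcs⟩ Γ Δ →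
      LDeriv b ⟨G₀.nodes ∪ G.nodes, insert (y, x) (G₀.arcs ∪ G.arcs)⟩ Γ Δ
  /-- `nodesplit D`: the conclusion graph is `G ⋈x (x,y) ⋈y G₀`,
  the premise graph is `G[y/x] ⋈y G₀`, with proviso `↑G x` -/
  | nodesplitD {b Γ Δ} (G G₀ : LGraph) (x y : ℕ) :
      x ∈ G.nodes → y ∈ G₀.nodes → G.nodes ∩ G₀.nodes = ∅ →
      (∀ z, (x, z) ∉ G.arcs) →
      LDeriv b ⟨(G.ren x y).nodes ∪ G₀.nodes, (G.ren x y).arcs ∪ G₀.arcs⟩ Γ Δ →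
      LDeriv b ⟨G.nodes ∪ G₀.nodes, insert (x, y) (G.arcs ∪ G₀.arcs)⟩ Γ Δ
  /-- `nodemerge D`: the premise graph is `G₀ ⋈y (y,x) ⋈x G`,
  the conclusion graph is `G₀[x/y] ⋈x G` and `y` is renamed to `x` in the contexts -/
  | nodemergeD {b Γ Δ} (G₀ G : LGraph) (x y : ℕ) :
      y ∈ G₀.nodes → x ∈ G.nodes → G₀.nodes ∩ G.nodes = ∅ →
      LDeriv b ⟨G₀.nodes ∪ G.nodes, insert (y, x) (G₀.arcs ∪ G.arcs)⟩ Γ Δ →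
      LDeriv b ⟨(G₀.ren y x).nodes ∪ G.nodes, (G₀.ren y x).arcs ∪ G.arcs⟩
        (renC Γ y x) (renC Δ y x)
  /-- `nodemerge U`: the premise graph is `G ⋈x (x,y) ⋈y G₀`,
  the conclusion graph is `G ⋈x G₀[x/y]` and `y` is renamed to `x` in the contexts -/
  | nodemergeU {b Γ Δ} (G G₀ : LGraph) (x y : ℕ) :
      x ∈ G.nodes → y ∈ G₀.nodes → G.nodes ∩ G₀.nodes = ∅ →
      LDeriv b ⟨G.nodes ∪ G₀.nodes, insert (x, y) (G.arcs ∪ G₀.arcs)⟩ Γ Δ →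
      LDeriv b ⟨G.nodes ∪ (G₀.ren y x).nodes, G.arcs ∪ (G₀.ren y x).arcs⟩
        (renC Γ y x) (renC Δ y x)
  | monotL {b G Γ Δ A} (x y : ℕ) : (x, y) ∈ G.arcs →
      LDeriv b G ((x, A) ::ₘ (y, A) ::ₘ Γ) Δ → LDeriv b G ((x, A) ::ₘ Γ) Δ
  | monotR {b G Γ Δ A} (x y : ℕ) : (y, x) ∈ G.arcs →
      LDeriv b G Γ ((y, A) ::ₘ (x, A) ::ₘ Δ) → LDeriv b G Γ ((x, A) ::ₘ Δ)
  | topL {b G Γ Δ x} : x ∈ G.nodes → LDeriv b G Γ Δ → LDeriv b G ((x, Form.top) ::ₘ Γ) Δ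
  | topR {G Γ Δ} (b) (x : ℕ) : Wf G Γ Δ → x ∈ G.nodes → LDeriv b G Γ ((x, Form.top) ::ₘ Δ)
  | botL {G Γ Δ} (b) (x : ℕ) : Wf G Γ Δ → x ∈ G.nodes → LDeriv b G ((x, Form.bot) ::ₘ Γ) Δ
  | botR {b G Γ Δ x} : x ∈ G.nodes → LDeriv b G Γ Δ → LDeriv b G Γ ((x, Form.bot) ::ₘ Δ)
  | andL {b G Γ Δ x A B} : LDeriv b G ((x, A) ::ₘ (x, B) ::ₘ Γ) Δ →
      LDeriv b G ((x, Form.and A B) ::ₘ Γ) Δ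
  | andR {b G Γ Δ x A B} : LDeriv b G Γ ((x, A) ::ₘ Δ) → LDeriv b G Γ ((x, B) ::ₘ Δ) →
      LDeriv b G Γ ((x, Form.and A B) ::ₘ Δ)
  | orL {b G Γ Δ x A B} : LDeriv b G ((x, A) ::ₘ Γ) Δ → LDeriv b G ((x, B) ::ₘ Γ) Δ →
      LDeriv b G ((x, Form.or A B) ::ₘ Γ) Δ
  | orR {b G Γ Δ x A B} : LDeriv b G Γ ((x, A) ::ₘ (x, B) ::ₘ Δ) →
      LDeriv b G Γ ((x, Form.or A B) ::ₘ Δ)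
  | impL {b G Γ Δ x A B} : LDeriv b G ((x, Form.imp A B) ::ₘ Γ) ((x, A) ::ₘ Δ) →
      LDeriv b G ((x, B) ::ₘ Γ) Δ → LDeriv b G ((x, Form.imp A B) ::ₘ Γ) Δ
  /-- `⊃R`: the premise graph is `G ⋈x (x,y)` with `y` fresh -/
  | impR {b G Γ Δ A B} (x y : ℕ) : x ∈ G.nodes → y ∉ G.nodes →
      LDeriv b ⟨insert y G.nodes, insert (x, y) G.arcs⟩ ((y, A) ::ₘ Γ) ((y, B) ::ₘ Δ) →
      LDeriv b G Γ ((x, Form.imp A B) ::ₘ Δ)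
  /-- `⤙L`: the premise graph is `(y,x) ⋈x G` with `y` fresh -/
  | exclL {b G Γ Δ A B} (x y : ℕ) : x ∈ G.nodes → y ∉ G.nodes →
      LDeriv b ⟨insert y G.nodes, insert (y, x) G.arcs⟩ ((y, A) ::ₘ Γ) ((y, B) ::ₘ Δ) →
      LDeriv b G ((x, Form.excl A B) ::ₘ Γ) Δ
  | exclR {b G Γ Δ x A B} : LDeriv b G Γ ((x, A) ::ₘ Δ) →
      LDeriv b G ((x, B) ::ₘ Γ) ((x, Form.excl A B) ::ₘ Δ) →
      LDeriv b G Γ ((x, Form.excl A B) ::ₘ Δ)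
/-- `LabOf Γ Δ x G Λ Θ` holds iff the labelled sequent `Λ ⊢_G Θ` is (a representative,
up to the choice of fresh labels, of) the translation `ℓ(Γ ⊢ Δ ; x)` of the nested
sequent `Γ ⊢ Δ` rooted at the label `x`. -/
inductive LabOf : List NForm → List NForm → ℕ → LGraph → LCtx → LCtx → Prop
  | nil (x : ℕ) : LabOf [] [] x ⟨{x}, ∅⟩ 0 0
  | antFm {Γ Δ x G Λ Θ} (A : Form) : LabOf Γ Δ x G Λ Θ →
      LabOf (.fm A :: Γ) Δ x G ((x, A) ::ₘ Λ) Θ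
  | sucFm {Γ Δ x G Λ Θ} (A : Form) : LabOf Γ Δ x G Λ Θ →
      LabOf Γ (.fm A :: Δ) x G Λ ((x, A) ::ₘ Θ)
  /-- a nested sequent member of the antecedent creates a fresh node `y`
  with an arc `(y,x)` -/
  | antSeq {Γ Δ x G Λ Θ Γ₀ Δ₀ y G₀ Λ₀ Θ₀} : LabOf Γ Δ x G Λ Θ → LabOf Γ₀ Δ₀ y G₀ Λ₀ Θ₀ →
      G.nodes ∩ G₀.nodes = ∅ →
      LabOf (.seq Γ₀ Δ₀ :: Γ) Δ x
        ⟨G.nodes ∪ G₀.nodes, insert (y, x) (G.arcs ∪ G₀.arcs)⟩ (Λ + Λ₀) (Θ + Θ₀)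
  /-- a nested sequent member of the succedent creates a fresh node `y`
  with an arc `(x,y)` -/
  | sucSeq {Γ Δ x G Λ Θ Γ₀ Δ₀ y G₀ Λ₀ Θ₀} : LabOf Γ Δ x G Λ Θ → LabOf Γ₀ Δ₀ y G₀ Λ₀ Θ₀ →
      G.nodes ∩ G₀.nodes = ∅ →
      LabOf Γ (.seq Γ₀ Δ₀ :: Δ) x
        ⟨G.nodes ∪ G₀.nodes, insert (x, y) (G.arcs ∪ G₀.arcs)⟩ (Λ + Λ₀) (Θ + Θ₀)


section Helpers

theorem LGraph.ext' {G H : LGraph} (hn : G.nodes = H.nodes) (ha : G.arcs = H.arcs) : G = H := by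
  cases G; cases H; simp_all

theorem LabOf.cast {Γ Δ x G Λ Θ G' Λ' Θ'} (h : LabOf Γ Δ x G Λ Θ)
    (hg : G = G') (hl : Λ = Λ') (ht : Θ = Θ') : LabOf Γ Δ x G' Λ' Θ' := by
  subst hg; subst hl; subst ht; exact h

theorem LDeriv.cast {b G Λ Θ G' Λ' Θ'} (h : LDeriv b G Λ Θ)
    (hg : G = G') (hl : Λ = Λ') (ht : Θ = Θ') : LDeriv b G' Λ' Θ' := by
  subst hg; subst hl; subst ht; exact h

theorem disj_not_mem {s t : Finset ℕ} (h : s ∩ t = ∅) {a : ℕ} (ha : a ∈ s) : a ∉ t := by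
  intro hb
  have : a ∈ s ∩ t := Finset.mem_inter.2 ⟨ha, hb⟩
  simp [h] at this

theorem LabOf.root_mem {Γ Δ x G Λ Θ} (h : LabOf Γ Δ x G Λ Θ) : x ∈ G.nodes := by
  induction h with
  | nil => simp
  | antFm _ _ ih => exact ih
  | sucFm _ _ ih => exact ih
  | antSeq _ _ _ ih _ => exact Finset.mem_union_left _ ih
  | sucSeq _ _ _ ih _ => exact Finset.mem_union_left _ ih

theorem LabOf.wf {Γ Δ x G Λ Θ} (h : LabOf Γ Δ x G Λ Θ) : Wf G Λ Θ := by
  induction h with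
  | nil => exact ⟨by simp, by simp⟩
  | antFm A h ih =>
    refine ⟨?_, ih.2⟩
    intro a ha
    rcases Multiset.mem_cons.1 ha with rfl | ha
    · exact h.root_mem
    · exact ih.1 a ha
  | sucFm A h ih =>
    refine ⟨ih.1, ?_⟩
    intro a ha
    rcases Multiset.mem_cons.1 ha with rfl | ha
    · exact h.root_mem
    · exact ih.2 a ha
  | antSeq _ _ _ ih ih₀ =>
    refine ⟨?_, ?_⟩ <;> intro a ha <;> simp only [Multiset.mem_add] at ha
    · rcases ha with ha | ha
      · exact Finset.mem_union_left _ (ih.1 a ha)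
      · exact Finset.mem_union_right _ (ih₀.1 a ha)
    · rcases ha with ha | ha
      · exact Finset.mem_union_left _ (ih.2 a ha)
      · exact Finset.mem_union_right _ (ih₀.2 a ha)
  | sucSeq _ _ _ ih ih₀ =>
    refine ⟨?_, ?_⟩ <;> intro a ha <;> simp only [Multiset.mem_add] at ha
    · rcases ha with ha | ha
      · exact Finset.mem_union_left _ (ih.1 a ha)
      · exact Finset.mem_union_right _ (ih₀.1 a ha)
    · rcases ha with ha | ha
      · exact Finset.mem_union_left _ (ih.2 a ha)
      · exact Finset.mem_union_right _ (ih₀.2 a ha)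

theorem LabOf.arcs_mem {Γ Δ x G Λ Θ} (h : LabOf Γ Δ x G Λ Θ) :
    ∀ a ∈ G.arcs, a.1 ∈ G.nodes ∧ a.2 ∈ G.nodes := by
  induction h with
  | nil => simp
  | antFm _ _ ih => exact ih
  | sucFm _ _ ih => exact ih
  | antSeq h h₀ hd ih ih₀ =>
    intro a ha
    simp only [Finset.mem_insert, Finset.mem_union] at ha ⊢
    rcases ha with rfl | ha | ha
    · exact ⟨Or.inr h₀.root_mem, Or.inl h.root_mem⟩
    · exact ⟨Or.inl (ih a ha).1, Or.inl (ih a ha).2⟩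
    · exact ⟨Or.inr (ih₀ a ha).1, Or.inr (ih₀ a ha).2⟩
  | sucSeq h h₀ hd ih ih₀ =>
    intro a ha
    simp only [Finset.mem_insert, Finset.mem_union] at ha ⊢
    rcases ha with rfl | ha | ha
    · exact ⟨Or.inl h.root_mem, Or.inr h₀.root_mem⟩
    · exact ⟨Or.inl (ih a ha).1, Or.inl (ih a ha).2⟩
    · exact ⟨Or.inr (ih₀ a ha).1, Or.inr (ih₀ a ha).2⟩

theorem LabOf.no_out' {Γ Δ x G Λ Θ} (h : LabOf Γ Δ x G Λ Θ) (hΔ : Δ = []) :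
    ∀ z, (x, z) ∉ G.arcs := by
  induction h with
  | nil => simp
  | antFm _ _ ih => exact ih hΔ
  | sucFm => simp at hΔ
  | antSeq h h₀ hd ih _ =>
    intro z hz
    simp only [Finset.mem_insert, Finset.mem_union] at hz
    rcases hz with he | hz | hz
    · injection he with h1 h2
      subst h1
      exact disj_not_mem hd h.root_mem h₀.root_mem
    · exact ih hΔ z hz
    · exact disj_not_mem hd h.root_mem (h₀.arcs_mem _ hz).1
  | sucSeq => simp at hΔ

theorem LabOf.no_in' {Γ Δ x G Λ Θ} (h : LabOf Γ Δ x G Λ Θ) (hΓ : Γ = []) :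
    ∀ z, (z, x) ∉ G.arcs := by
  induction h with
  | nil => simp
  | sucFm _ _ ih => exact ih hΓ
  | antFm => simp at hΓ
  | sucSeq h h₀ hd ih _ =>
    intro z hz
    simp only [Finset.mem_insert, Finset.mem_union] at hz
    rcases hz with he | hz | hz
    · injection he with h1 h2
      subst h2
      exact disj_not_mem hd h.root_mem h₀.root_mem
    · exact ih hΓ z hz
    · exact disj_not_mem hd h.root_mem (h₀.arcs_mem _ hz).2
  | antSeq => simp at hΓ

end Helpers
section Ren

theorem image_ite_id {s : Finset ℕ} {x y : ℕ} (h : x ∉ s) :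
    s.image (fun z => if z = x then y else z) = s := by
  ext z
  simp only [Finset.mem_image]
  constructor
  · rintro ⟨w, hw, rfl⟩
    by_cases hwx : w = x
    · exact absurd (hwx ▸ hw) h
    · simpa [hwx] using hw
  · intro hz
    refine ⟨z, hz, ?_⟩
    by_cases hzx : z = x
    · exact absurd (hzx ▸ hz) h
    · simp [hzx]

theorem image_ite_pair_id {s : Finset (ℕ × ℕ)} {x y : ℕ}
    (h : ∀ a ∈ s, a.1 ≠ x ∧ a.2 ≠ x) :
    s.image (fun a => ((if a.1 = x then y else a.1), (if a.2 = x then y else a.2))) = s := by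
  ext z
  simp only [Finset.mem_image]
  constructor
  · rintro ⟨w, hw, rfl⟩
    simpa [(h w hw).1, (h w hw).2] using hw
  · intro hz
    exact ⟨z, hz, by simp [(h z hz).1, (h z hz).2]⟩

theorem renC_add (Λ Λ' : LCtx) (x y : ℕ) :
    renC (Λ + Λ') x y = renC Λ x y + renC Λ' x y := Multiset.map_add _ _ _

theorem renC_cons (z : ℕ) (A : Form) (Λ : LCtx) (x y : ℕ) :
    renC ((z, A) ::ₘ Λ) x y = ((if z = x then y else z), A) ::ₘ renC Λ x y :=
  Multiset.map_cons _ _ _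

theorem renC_id {Λ : LCtx} {x : ℕ} (h : ∀ a ∈ Λ, a.1 ≠ x) (y : ℕ) :
    renC Λ x y = Λ := by
  unfold renC
  have he : ∀ a ∈ Λ, ((fun a => ((if a.1 = x then y else (a.1 : ℕ)), (a.2 : Form))) a) = id a := by
    intro a ha; simp [h a ha]
  rw [Multiset.map_congr rfl he, Multiset.map_id]

theorem renC_zero (x y : ℕ) : renC 0 x y = 0 := rfl

theorem mem_ren_nodes {G : LGraph} {x y z : ℕ} :
    z ∈ (G.ren x y).nodes ↔ ∃ w ∈ G.nodes, (if w = x then y else w) = z := by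
  simp [LGraph.ren]

theorem root_mem_ren {G : LGraph} {x y : ℕ} (h : x ∈ G.nodes) : y ∈ (G.ren x y).nodes :=
  mem_ren_nodes.2 ⟨x, h, by simp⟩

theorem ren_nodes_subset {G : LGraph} {x y z : ℕ} (hz : z ∈ (G.ren x y).nodes) :
    z = y ∨ (z ∈ G.nodes ∧ z ≠ x) := by
  rcases mem_ren_nodes.1 hz with ⟨w, hw, he⟩
  by_cases hwx : w = x
  · left; simp [hwx] at he; omega
  · right; simp [hwx] at he; subst he; exact ⟨hw, hwx⟩

/-- rerooting a translation at a fresh label -/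
theorem LabOf.reroot {Γ Δ x G Λ Θ} (h : LabOf Γ Δ x G Λ Θ) {y : ℕ} (hy : y ∉ G.nodes) :
    LabOf Γ Δ y (G.ren x y) (renC Λ x y) (renC Θ x y) := by
  induction h with
  | nil =>
    exact (LabOf.nil y).cast (by apply LGraph.ext' <;> simp [LGraph.ren]) rfl rfl
  | antFm A h ih =>
    simpa [renC_cons, renC_zero] using (ih hy).antFm A
  | sucFm A h ih =>
    simpa [renC_cons, renC_zero] using (ih hy).sucFm A
  | @antSeq Γ Δ x G Λ Θ Γ₀ Δ₀ y₀ G₀ Λ₀ Θ₀ h h₀ hd ih ih₀ =>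
    simp only [Finset.mem_union, not_or] at hy
    have hxG : x ∈ G.nodes := h.root_mem
    have hxG₀ : x ∉ G₀.nodes := disj_not_mem hd hxG
    have hy₀ : y₀ ≠ x := fun he => hxG₀ (he ▸ h₀.root_mem)
    have hdisj : (G.ren x y).nodes ∩ G₀.nodes = ∅ := by
      rw [Finset.eq_empty_iff_forall_notMem]
      intro z hz
      rcases Finset.mem_inter.1 hz with ⟨hz1, hz2⟩
      rcases ren_nodes_subset hz1 with rfl | ⟨hz3, _⟩
      · exact hy.2 hz2
      · exact disj_not_mem hd hz3 hz2
    refine ((ih hy.1).antSeq h₀ hdisj).cast ?_ ?_ ?_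
    · apply LGraph.ext'
      · simp only [LGraph.ren, Finset.image_union]
        rw [image_ite_id hxG₀]
      · simp only [LGraph.ren, Finset.image_insert, Finset.image_union]
        rw [image_ite_pair_id (s := G₀.arcs) (fun a ha =>
          ⟨fun he => hxG₀ (by rw [← he]; exact (h₀.arcs_mem a ha).1),
           fun he => hxG₀ (by rw [← he]; exact (h₀.arcs_mem a ha).2)⟩)]
        simp [hy₀]
    · rw [renC_add, renC_id (Λ := Λ₀) (fun a ha => fun he => hxG₀ (by rw [← he]; exact h₀.wf.1 a ha)) y]
    · rw [renC_add, renC_id (Λ := Θ₀) (fun a ha => fun he => hxG₀ (by rw [← he]; exact h₀.wf.2 a ha)) y]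
  | @sucSeq Γ Δ x G Λ Θ Γ₀ Δ₀ y₀ G₀ Λ₀ Θ₀ h h₀ hd ih ih₀ =>
    simp only [Finset.mem_union, not_or] at hy
    have hxG : x ∈ G.nodes := h.root_mem
    have hxG₀ : x ∉ G₀.nodes := disj_not_mem hd hxG
    have hy₀ : y₀ ≠ x := fun he => hxG₀ (he ▸ h₀.root_mem)
    have hdisj : (G.ren x y).nodes ∩ G₀.nodes = ∅ := by
      rw [Finset.eq_empty_iff_forall_notMem]
      intro z hz
      rcases Finset.mem_inter.1 hz with ⟨hz1, hz2⟩
      rcases ren_nodes_subset hz1 with rfl | ⟨hz3, _⟩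
      · exact hy.2 hz2
      · exact disj_not_mem hd hz3 hz2
    refine ((ih hy.1).sucSeq h₀ hdisj).cast ?_ ?_ ?_
    · apply LGraph.ext'
      · simp only [LGraph.ren, Finset.image_union]
        rw [image_ite_id hxG₀]
      · simp only [LGraph.ren, Finset.image_insert, Finset.image_union]
        rw [image_ite_pair_id (s := G₀.arcs) (fun a ha =>
          ⟨fun he => hxG₀ (by rw [← he]; exact (h₀.arcs_mem a ha).1),
           fun he => hxG₀ (by rw [← he]; exact (h₀.arcs_mem a ha).2)⟩)]
        simp [hy₀]
    · rw [renC_add, renC_id (Λ := Λ₀) (fun a ha => fun he => hxG₀ (by rw [← he]; exact h₀.wf.1 a ha)) y]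
    · rw [renC_add, renC_id (Λ := Θ₀) (fun a ha => fun he => hxG₀ (by rw [← he]; exact h₀.wf.2 a ha)) y]

theorem ren_ren_cancel {G : LGraph} {x y : ℕ}
    (harcs : ∀ a ∈ G.arcs, a.1 ∈ G.nodes ∧ a.2 ∈ G.nodes) (hy : y ∉ G.nodes) :
    (G.ren x y).ren y x = G := by
  apply LGraph.ext'
  · show Finset.image _ (Finset.image _ _) = _
    rw [Finset.image_image]
    have hcon : ∀ z ∈ G.nodes,
        ((fun z => if z = y then x else z) ∘ (fun z => if z = x then y else z)) z = z := by
      intro z hz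
      have hzy : z ≠ y := fun he => hy (he ▸ hz)
      by_cases hzx : z = x <;> simp [Function.comp, hzx, hzy] <;> omega
    rw [Finset.image_congr hcon]; exact Finset.image_id
  · show Finset.image _ (Finset.image _ _) = _
    rw [Finset.image_image]
    have hcon : ∀ a ∈ G.arcs,
        ((fun a : ℕ × ℕ => ((if a.1 = y then x else a.1), (if a.2 = y then x else a.2))) ∘
         (fun a : ℕ × ℕ => ((if a.1 = x then y else a.1), (if a.2 = x then y else a.2)))) a
          = a := by
      intro a ha
      have h1y : a.1 ≠ y := fun he => hy (he ▸ (harcs a ha).1)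
      have h2y : a.2 ≠ y := fun he => hy (he ▸ (harcs a ha).2)
      by_cases h1 : a.1 = x <;> by_cases h2 : a.2 = x <;>
        simp [Function.comp, h1, h2, h1y, h2y, Prod.ext_iff] <;> omega
    rw [Finset.image_congr hcon]; exact Finset.image_id

theorem renC_renC_cancel {Λ : LCtx} {x y : ℕ} (h : ∀ a ∈ Λ, a.1 ≠ y) :
    renC (renC Λ x y) y x = Λ := by
  unfold renC
  rw [Multiset.map_map]
  have hcon : ∀ a ∈ Λ, ((fun a : ℕ × Form => ((if a.1 = y then x else a.1), a.2)) ∘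
      (fun a : ℕ × Form => ((if a.1 = x then y else a.1), a.2))) a = id a := by
    intro a ha
    have hy := h a ha
    by_cases hx : a.1 = x <;> simp [Function.comp, hx, hy, Prod.ext_iff] <;> omega
  rw [Multiset.map_congr rfl hcon, Multiset.map_id]

end Ren
section Inv

theorem finset_disj_of_subset {s s' t : Finset ℕ} (h : s' ⊆ s) (hd : s ∩ t = ∅) :
    s' ∩ t = ∅ := by
  rw [Finset.eq_empty_iff_forall_notMem] at hd ⊢
  intro a ha
  rcases Finset.mem_inter.1 ha with ⟨h1, h2⟩
  exact hd a (Finset.mem_inter.2 ⟨h h1, h2⟩)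

theorem LabOf.antInv' {Γall Δ x G Λ Θ} (h : LabOf Γall Δ x G Λ Θ) :
    ∀ {N Γ}, Γall = N :: Γ →
    (∃ A Λ', N = .fm A ∧ Λ = (x, A) ::ₘ Λ' ∧ LabOf Γ Δ x G Λ' Θ) ∨
    (∃ Γ₀ Δ₀ y G' G₀ Λ' Λ₀ Θ' Θ₀, N = .seq Γ₀ Δ₀ ∧ LabOf Γ Δ x G' Λ' Θ' ∧
      LabOf Γ₀ Δ₀ y G₀ Λ₀ Θ₀ ∧ G'.nodes ∩ G₀.nodes = ∅ ∧
      G.nodes = G'.nodes ∪ G₀.nodes ∧ G.arcs = insert (y, x) (G'.arcs ∪ G₀.arcs) ∧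
      Λ = Λ' + Λ₀ ∧ Θ = Θ' + Θ₀) := by
  induction h with
  | nil => intro N Γ h; simp at h
  | antFm A h ih =>
    rintro N Γ ⟨rfl, rfl⟩
    exact Or.inl ⟨A, _, rfl, rfl, h⟩
  | @sucFm Γ1 Δ1 x1 G1 Λ1 Θ1 A h ih =>
    rintro N Γ rfl
    rcases ih rfl with ⟨A', Λ', rfl, rfl, h'⟩ | ⟨Γ₀, Δ₀, y, G', G₀, Λ', Λ₀, Θ', Θ₀, rfl,
        h', h₀, hd, hn, ha, rfl, rfl⟩
    · exact Or.inl ⟨A', Λ', rfl, rfl, h'.sucFm A⟩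
    · exact Or.inr ⟨Γ₀, Δ₀, y, G', G₀, Λ', Λ₀, (x1, A) ::ₘ Θ', Θ₀, rfl, h'.sucFm A, h₀, hd,
        hn, ha, rfl, by rw [Multiset.cons_add]⟩
  | @antSeq Γ' Δ' x' G' Λ' Θ' Γ₀ Δ₀ y G₀ Λ₀ Θ₀ h h₀ hd ih ih₀ =>
    rintro N Γ ⟨rfl, rfl⟩
    exact Or.inr ⟨Γ₀, Δ₀, y, G', G₀, Λ', Λ₀, Θ', Θ₀, rfl, h, h₀, hd, rfl, rfl, rfl, rfl⟩
  | @sucSeq Γ' Δ' x' Gi Λi Θi Γs Δs ys Gs Λs Θs h h₀ hd ih ih₀ =>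
    rintro N Γ rfl
    rcases ih rfl with ⟨A', Λ', rfl, rfl, h'⟩ | ⟨Γ₀, Δ₀, y, G', G₀, Λ', Λ₀, Θ', Θ₀, rfl,
        h', h₀', hd', hn, ha, rfl, rfl⟩
    · exact Or.inl ⟨A', Λ' + Λs, rfl, by rw [Multiset.cons_add], h'.sucSeq h₀ hd⟩
    · have hG'sub : G'.nodes ⊆ Gi.nodes := by rw [hn]; exact Finset.subset_union_left
      have hG₀sub : G₀.nodes ⊆ Gi.nodes := by rw [hn]; exact Finset.subset_union_right
      have hdis1 : G'.nodes ∩ Gs.nodes = ∅ := finset_disj_of_subset hG'sub hd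
      have hdis2 : Gs.nodes ∩ G₀.nodes = ∅ := by
        rw [Finset.inter_comm]
        exact finset_disj_of_subset hG₀sub hd
      refine Or.inr ⟨Γ₀, Δ₀, y, ⟨G'.nodes ∪ Gs.nodes, insert (x', ys) (G'.arcs ∪ Gs.arcs)⟩,
        G₀, Λ' + Λs, Λ₀, Θ' + Θs, Θ₀, rfl, h'.sucSeq h₀ hdis1, h₀', ?_, ?_, ?_,
        add_right_comm Λ' Λ₀ Λs, add_right_comm Θ' Θ₀ Θs⟩
      · rw [Finset.eq_empty_iff_forall_notMem]
        intro a haa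
        rcases Finset.mem_inter.1 haa with ⟨h1, h2⟩
        rcases Finset.mem_union.1 h1 with h1 | h1
        · exact disj_not_mem hd' h1 h2
        · exact disj_not_mem hdis2 h1 h2
      · show Gi.nodes ∪ Gs.nodes = _
        rw [hn]
        ext a
        simp only [Finset.mem_union]
        tauto
      · show insert (x', ys) (Gi.arcs ∪ Gs.arcs) = _
        rw [ha]
        ext a
        simp only [Finset.mem_insert, Finset.mem_union]
        tauto

theorem LabOf.sucInv' {Γ Δall x G Λ Θ} (h : LabOf Γ Δall x G Λ Θ) :
    ∀ {N Δ}, Δall = N :: Δ →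
    (∃ A Θ', N = .fm A ∧ Θ = (x, A) ::ₘ Θ' ∧ LabOf Γ Δ x G Λ Θ') ∨
    (∃ Γ₀ Δ₀ y G' G₀ Λ' Λ₀ Θ' Θ₀, N = .seq Γ₀ Δ₀ ∧ LabOf Γ Δ x G' Λ' Θ' ∧
      LabOf Γ₀ Δ₀ y G₀ Λ₀ Θ₀ ∧ G'.nodes ∩ G₀.nodes = ∅ ∧
      G.nodes = G'.nodes ∪ G₀.nodes ∧ G.arcs = insert (x, y) (G'.arcs ∪ G₀.arcs) ∧
      Λ = Λ' + Λ₀ ∧ Θ = Θ' + Θ₀) := by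
  induction h with
  | nil => intro N Δ h; simp at h
  | sucFm A h ih =>
    rintro N Δ ⟨rfl, rfl⟩
    exact Or.inl ⟨A, _, rfl, rfl, h⟩
  | @antFm Γ1 Δ1 x1 G1 Λ1 Θ1 A h ih =>
    rintro N Δ rfl
    rcases ih rfl with ⟨A', Θ', rfl, rfl, h'⟩ | ⟨Γ₀, Δ₀, y, G', G₀, Λ', Λ₀, Θ', Θ₀, rfl,
        h', h₀, hd, hn, ha, rfl, rfl⟩
    · exact Or.inl ⟨A', Θ', rfl, rfl, h'.antFm A⟩
    · exact Or.inr ⟨Γ₀, Δ₀, y, G', G₀, (x1, A) ::ₘ Λ', Λ₀, Θ', Θ₀, rfl, h'.antFm A, h₀, hd,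
        hn, ha, by rw [Multiset.cons_add], rfl⟩
  | @sucSeq Γ' Δ' x' G' Λ' Θ' Γ₀ Δ₀ y G₀ Λ₀ Θ₀ h h₀ hd ih ih₀ =>
    rintro N Δ ⟨rfl, rfl⟩
    exact Or.inr ⟨Γ₀, Δ₀, y, G', G₀, Λ', Λ₀, Θ', Θ₀, rfl, h, h₀, hd, rfl, rfl, rfl, rfl⟩
  | @antSeq Γ' Δ' x' Gi Λi Θi Γs Δs ys Gs Λs Θs h h₀ hd ih ih₀ =>
    rintro N Δ rfl
    rcases ih rfl with ⟨A', Θ', rfl, rfl, h'⟩ | ⟨Γ₀, Δ₀, y, G', G₀, Λ', Λ₀, Θ', Θ₀, rfl,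
        h', h₀', hd', hn, ha, rfl, rfl⟩
    · exact Or.inl ⟨A', Θ' + Θs, rfl, by rw [Multiset.cons_add], h'.antSeq h₀ hd⟩
    · have hG'sub : G'.nodes ⊆ Gi.nodes := by rw [hn]; exact Finset.subset_union_left
      have hG₀sub : G₀.nodes ⊆ Gi.nodes := by rw [hn]; exact Finset.subset_union_right
      have hdis1 : G'.nodes ∩ Gs.nodes = ∅ := finset_disj_of_subset hG'sub hd
      have hdis2 : Gs.nodes ∩ G₀.nodes = ∅ := by
        rw [Finset.inter_comm]
        exact finset_disj_of_subset hG₀sub hd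
      refine Or.inr ⟨Γ₀, Δ₀, y, ⟨G'.nodes ∪ Gs.nodes, insert (ys, x') (G'.arcs ∪ Gs.arcs)⟩,
        G₀, Λ' + Λs, Λ₀, Θ' + Θs, Θ₀, rfl, h'.antSeq h₀ hdis1, h₀', ?_, ?_, ?_,
        add_right_comm Λ' Λ₀ Λs, add_right_comm Θ' Θ₀ Θs⟩
      · rw [Finset.eq_empty_iff_forall_notMem]
        intro a haa
        rcases Finset.mem_inter.1 haa with ⟨h1, h2⟩
        rcases Finset.mem_union.1 h1 with h1 | h1
        · exact disj_not_mem hd' h1 h2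
        · exact disj_not_mem hdis2 h1 h2
      · show Gi.nodes ∪ Gs.nodes = _
        rw [hn]
        ext a
        simp only [Finset.mem_union]
        tauto
      · show insert (ys, x') (Gi.arcs ∪ Gs.arcs) = _
        rw [ha]
        ext a
        simp only [Finset.mem_insert, Finset.mem_union]
        tauto

/-- clean inversion for a formula at the head of the antecedent -/
theorem LabOf.antFmInv {A Γ Δ x G Λ Θ} (h : LabOf (.fm A :: Γ) Δ x G Λ Θ) :
    ∃ Λ', Λ = (x, A) ::ₘ Λ' ∧ LabOf Γ Δ x G Λ' Θ := by
  rcases h.antInv' rfl with ⟨A', Λ', he, hl, h'⟩ | ⟨_, _, _, _, _, _, _, _, _, he, _⟩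
  · cases he; exact ⟨Λ', hl, h'⟩
  · cases he

theorem LabOf.sucFmInv {A Γ Δ x G Λ Θ} (h : LabOf Γ (.fm A :: Δ) x G Λ Θ) :
    ∃ Θ', Θ = (x, A) ::ₘ Θ' ∧ LabOf Γ Δ x G Λ Θ' := by
  rcases h.sucInv' rfl with ⟨A', Θ', he, ht, h'⟩ | ⟨_, _, _, _, _, _, _, _, _, he, _⟩
  · cases he; exact ⟨Θ', ht, h'⟩
  · cases he

end Inv
section SplitCombine

theorem LabOf.combine {Γ₁ Δ₁ x G₁ Λ₁ Θ₁} (h₁ : LabOf Γ₁ Δ₁ x G₁ Λ₁ Θ₁) :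
    ∀ {Γ₂ Δ₂ G₂ Λ₂ Θ₂}, LabOf Γ₂ Δ₂ x G₂ Λ₂ Θ₂ → G₁.nodes ∩ G₂.nodes ⊆ {x} →
    LabOf (Γ₁ ++ Γ₂) (Δ₁ ++ Δ₂) x ⟨G₁.nodes ∪ G₂.nodes, G₁.arcs ∪ G₂.arcs⟩
      (Λ₁ + Λ₂) (Θ₁ + Θ₂) := by
  induction h₁ with
  | nil =>
    intro Γ₂ Δ₂ G₂ Λ₂ Θ₂ h₂ _
    refine h₂.cast ?_ (zero_add _).symm (zero_add _).symm
    apply LGraph.ext'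
    · ext a
      simp only [Finset.mem_union, Finset.mem_singleton]
      constructor
      · intro ha; exact Or.inr ha
      · rintro (rfl | ha)
        · exact h₂.root_mem
        · exact ha
    · simp
  | antFm A h ih =>
    intro Γ₂ Δ₂ G₂ Λ₂ Θ₂ h₂ hd
    exact ((ih h₂ hd).antFm A).cast rfl (Multiset.cons_add _ _ _).symm rfl
  | sucFm A h ih =>
    intro Γ₂ Δ₂ G₂ Λ₂ Θ₂ h₂ hd
    exact ((ih h₂ hd).sucFm A).cast rfl rfl (Multiset.cons_add _ _ _).symm
  | @antSeq Γi Δi xi Gi Λi Θi Γ₀ Δ₀ y G₀ Λ₀ Θ₀ h h₀ hd ih ih₀ =>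
    intro Γ₂ Δ₂ G₂ Λ₂ Θ₂ h₂ hsub
    have hGi : Gi.nodes ∩ G₂.nodes ⊆ {xi} := fun a ha => hsub (by
      rcases Finset.mem_inter.1 ha with ⟨h1, h2⟩
      exact Finset.mem_inter.2 ⟨Finset.mem_union_left _ h1, h2⟩)
    have hx₀ : xi ∉ G₀.nodes := disj_not_mem hd h.root_mem
    have hdis : (Gi.nodes ∪ G₂.nodes) ∩ G₀.nodes = ∅ := by
      rw [Finset.eq_empty_iff_forall_notMem]
      intro a ha
      rcases Finset.mem_inter.1 ha with ⟨h1, h2⟩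
      rcases Finset.mem_union.1 h1 with h1 | h1
      · exact disj_not_mem hd h1 h2
      · have : a ∈ ({xi} : Finset ℕ) := hsub (Finset.mem_inter.2
          ⟨Finset.mem_union_right _ h2, h1⟩)
        rw [Finset.mem_singleton] at this
        exact hx₀ (this ▸ h2)
    refine (((ih h₂ hGi).antSeq h₀ hdis)).cast ?_
      (add_right_comm Λi Λ₂ Λ₀) (add_right_comm Θi Θ₂ Θ₀)
    apply LGraph.ext'
    · ext a; simp only [Finset.mem_union]; tauto
    · ext a; simp only [Finset.mem_insert, Finset.mem_union]; tauto
  | @sucSeq Γi Δi xi Gi Λi Θi Γ₀ Δ₀ y G₀ Λ₀ Θ₀ h h₀ hd ih ih₀ =>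
    intro Γ₂ Δ₂ G₂ Λ₂ Θ₂ h₂ hsub
    have hGi : Gi.nodes ∩ G₂.nodes ⊆ {xi} := fun a ha => hsub (by
      rcases Finset.mem_inter.1 ha with ⟨h1, h2⟩
      exact Finset.mem_inter.2 ⟨Finset.mem_union_left _ h1, h2⟩)
    have hx₀ : xi ∉ G₀.nodes := disj_not_mem hd h.root_mem
    have hdis : (Gi.nodes ∪ G₂.nodes) ∩ G₀.nodes = ∅ := by
      rw [Finset.eq_empty_iff_forall_notMem]
      intro a ha
      rcases Finset.mem_inter.1 ha with ⟨h1, h2⟩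
      rcases Finset.mem_union.1 h1 with h1 | h1
      · exact disj_not_mem hd h1 h2
      · have : a ∈ ({xi} : Finset ℕ) := hsub (Finset.mem_inter.2
          ⟨Finset.mem_union_right _ h2, h1⟩)
        rw [Finset.mem_singleton] at this
        exact hx₀ (this ▸ h2)
    refine (((ih h₂ hGi).sucSeq h₀ hdis)).cast ?_
      (add_right_comm Λi Λ₂ Λ₀) (add_right_comm Θi Θ₂ Θ₀)
    apply LGraph.ext'
    · ext a; simp only [Finset.mem_union]; tauto
    · ext a; simp only [Finset.mem_insert, Finset.mem_union]; tauto

theorem LabOf.split {Γ₁ : List NForm} : ∀ {Δ₁ Γ₂ Δ₂ x G Λ Θ},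
    LabOf (Γ₁ ++ Γ₂) (Δ₁ ++ Δ₂) x G Λ Θ →
    ∃ G₁ Λ₁ Θ₁ G₂ Λ₂ Θ₂, LabOf Γ₁ Δ₁ x G₁ Λ₁ Θ₁ ∧ LabOf Γ₂ Δ₂ x G₂ Λ₂ Θ₂ ∧
      G₁.nodes ∩ G₂.nodes ⊆ {x} ∧ G.nodes = G₁.nodes ∪ G₂.nodes ∧
      G.arcs = G₁.arcs ∪ G₂.arcs ∧ Λ = Λ₁ + Λ₂ ∧ Θ = Θ₁ + Θ₂ := by
  induction Γ₁ with
  | nil =>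
    intro Δ₁
    induction Δ₁ with
    | nil =>
      intro Γ₂ Δ₂ x G Λ Θ h
      refine ⟨⟨{x}, ∅⟩, 0, 0, G, Λ, Θ, LabOf.nil x, h, ?_, ?_, by simp, by simp, by simp⟩
      · intro a ha
        exact Finset.mem_inter.1 ha |>.1
      · ext a
        simp only [Finset.mem_union, Finset.mem_singleton]
        constructor
        · intro ha; exact Or.inr ha
        · rintro (rfl | ha)
          · exact h.root_mem
          · exact ha
    | cons N Δ₁ ihΔ =>
      intro Γ₂ Δ₂ x G Λ Θ h
      rcases h.sucInv' rfl with ⟨A, Θ', rfl, rfl, h'⟩ | ⟨Γ₀, Δ₀, y, G', G₀, Λ', Λ₀, Θ', Θ₀,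
          rfl, h', h₀, hd, hn, ha, rfl, rfl⟩
      · rcases ihΔ h' with ⟨G₁, Λ₁, Θ₁, G₂, Λ₂, Θ₂, hh₁, hh₂, hsub, hn, harc, rfl, rfl⟩
        exact ⟨G₁, Λ₁, (x, A) ::ₘ Θ₁, G₂, Λ₂, Θ₂, hh₁.sucFm A, hh₂, hsub, hn, harc, rfl,
          (Multiset.cons_add _ _ _).symm⟩
      · rcases ihΔ h' with ⟨G₁, Λ₁, Θ₁, G₂, Λ₂, Θ₂, hh₁, hh₂, hsub, hn', harc', rfl, rfl⟩
        have hG₁sub : G₁.nodes ⊆ G'.nodes := by rw [hn']; exact Finset.subset_union_left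
        have hG₂sub : G₂.nodes ⊆ G'.nodes := by rw [hn']; exact Finset.subset_union_right
        have hd₁ : G₁.nodes ∩ G₀.nodes = ∅ := finset_disj_of_subset hG₁sub hd
        have hd₂ : G₂.nodes ∩ G₀.nodes = ∅ := finset_disj_of_subset hG₂sub hd
        refine ⟨⟨G₁.nodes ∪ G₀.nodes, insert (x, y) (G₁.arcs ∪ G₀.arcs)⟩, Λ₁ + Λ₀,
          Θ₁ + Θ₀, G₂, Λ₂, Θ₂, hh₁.sucSeq h₀ hd₁, hh₂, ?_, ?_, ?_,
          add_right_comm Λ₁ Λ₂ Λ₀, add_right_comm Θ₁ Θ₂ Θ₀⟩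
        · intro a haa
          rcases Finset.mem_inter.1 haa with ⟨h1, h2⟩
          rcases Finset.mem_union.1 h1 with h1 | h1
          · exact hsub (Finset.mem_inter.2 ⟨h1, h2⟩)
          · exact absurd h1 (disj_not_mem hd₂ h2)
        · rw [hn, hn']
          ext a; simp only [Finset.mem_union]; tauto
        · rw [ha, harc']
          ext a; simp only [Finset.mem_insert, Finset.mem_union]; tauto
  | cons N Γ₁ ihΓ =>
    intro Δ₁ Γ₂ Δ₂ x G Λ Θ h
    rcases h.antInv' rfl with ⟨A, Λ', rfl, rfl, h'⟩ | ⟨Γ₀, Δ₀, y, G', G₀, Λ', Λ₀, Θ', Θ₀,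
        rfl, h', h₀, hd, hn, ha, rfl, rfl⟩
    · rcases ihΓ h' with ⟨G₁, Λ₁, Θ₁, G₂, Λ₂, Θ₂, hh₁, hh₂, hsub, hn, harc, rfl, rfl⟩
      exact ⟨G₁, (x, A) ::ₘ Λ₁, Θ₁, G₂, Λ₂, Θ₂, hh₁.antFm A, hh₂, hsub, hn, harc,
        (Multiset.cons_add _ _ _).symm, rfl⟩
    · rcases ihΓ h' with ⟨G₁, Λ₁, Θ₁, G₂, Λ₂, Θ₂, hh₁, hh₂, hsub, hn', harc', rfl, rfl⟩
      have hG₁sub : G₁.nodes ⊆ G'.nodes := by rw [hn']; exact Finset.subset_union_left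
      have hG₂sub : G₂.nodes ⊆ G'.nodes := by rw [hn']; exact Finset.subset_union_right
      have hd₁ : G₁.nodes ∩ G₀.nodes = ∅ := finset_disj_of_subset hG₁sub hd
      have hd₂ : G₂.nodes ∩ G₀.nodes = ∅ := finset_disj_of_subset hG₂sub hd
      refine ⟨⟨G₁.nodes ∪ G₀.nodes, insert (y, x) (G₁.arcs ∪ G₀.arcs)⟩, Λ₁ + Λ₀,
        Θ₁ + Θ₀, G₂, Λ₂, Θ₂, hh₁.antSeq h₀ hd₁, hh₂, ?_, ?_, ?_,
        add_right_comm Λ₁ Λ₂ Λ₀, add_right_comm Θ₁ Θ₂ Θ₀⟩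
      · intro a haa
        rcases Finset.mem_inter.1 haa with ⟨h1, h2⟩
        rcases Finset.mem_union.1 h1 with h1 | h1
        · exact hsub (Finset.mem_inter.2 ⟨h1, h2⟩)
        · exact absurd h1 (disj_not_mem hd₂ h2)
      · rw [hn, hn']
        ext a; simp only [Finset.mem_union]; tauto
      · rw [ha, harc']
        ext a; simp only [Finset.mem_insert, Finset.mem_union]; tauto

end SplitCombine
section CEqInv

theorem LabOf.antSeq' {Γ Δ x G' Λ' Θ' Γ₀ Δ₀ y G₀ Λ₀ Θ₀ G Λ Θ}
    (h : LabOf Γ Δ x G' Λ' Θ') (h₀ : LabOf Γ₀ Δ₀ y G₀ Λ₀ Θ₀)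
    (hd : G'.nodes ∩ G₀.nodes = ∅)
    (hn : G.nodes = G'.nodes ∪ G₀.nodes) (ha : G.arcs = insert (y, x) (G'.arcs ∪ G₀.arcs))
    (hl : Λ = Λ' + Λ₀) (ht : Θ = Θ' + Θ₀) :
    LabOf (.seq Γ₀ Δ₀ :: Γ) Δ x G Λ Θ :=
  (h.antSeq h₀ hd).cast (LGraph.ext' hn.symm ha.symm) hl.symm ht.symm

theorem LabOf.sucSeq' {Γ Δ x G' Λ' Θ' Γ₀ Δ₀ y G₀ Λ₀ Θ₀ G Λ Θ}
    (h : LabOf Γ Δ x G' Λ' Θ') (h₀ : LabOf Γ₀ Δ₀ y G₀ Λ₀ Θ₀)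
    (hd : G'.nodes ∩ G₀.nodes = ∅)
    (hn : G.nodes = G'.nodes ∪ G₀.nodes) (ha : G.arcs = insert (x, y) (G'.arcs ∪ G₀.arcs))
    (hl : Λ = Λ' + Λ₀) (ht : Θ = Θ' + Θ₀) :
    LabOf Γ (.seq Γ₀ Δ₀ :: Δ) x G Λ Θ :=
  (h.sucSeq h₀ hd).cast (LGraph.ext' hn.symm ha.symm) hl.symm ht.symm

theorem labof_swap_ant {a b Γ Δ x G Λ Θ} (h : LabOf (a :: b :: Γ) Δ x G Λ Θ) :
    LabOf (b :: a :: Γ) Δ x G Λ Θ := by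
  rcases h.antInv' rfl with ⟨A, Λ', rfl, rfl, h'⟩ | ⟨Γ₁, Δ₁, y₁, G', G₁, Λ', Λ₁, Θ', Θ₁,
      rfl, h', h₁, hd₁, hn₁, ha₁, rfl, rfl⟩
  · rcases h'.antInv' rfl with ⟨B, Λ'', rfl, rfl, h''⟩ | ⟨Γ₂, Δ₂, y₂, G'', G₂, Λ'', Λ₂,
        Θ'', Θ₂, rfl, h'', h₂, hd₂, hn₂, ha₂, rfl, rfl⟩
    · exact (((h''.antFm A).antFm B)).cast rfl (Multiset.cons_swap _ _ _) rfl
    · exact (h''.antFm A).antSeq' h₂ hd₂ hn₂ ha₂ (by rw [Multiset.cons_add]) rfl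
  · rcases h'.antInv' rfl with ⟨B, Λ'', rfl, rfl, h''⟩ | ⟨Γ₂, Δ₂, y₂, G'', G₂, Λ'', Λ₂,
        Θ'', Θ₂, rfl, h'', h₂, hd₂, hn₂, ha₂, rfl, rfl⟩
    · refine (h''.antSeq' h₁ ?_ ?_ ?_ rfl rfl).antFm B |>.cast rfl ?_ rfl
      · exact hd₁
      · exact hn₁
      · exact ha₁
      · rw [Multiset.cons_add]
    · -- both heads are nested sequents
      have hG''sub : G''.nodes ⊆ G'.nodes := by rw [hn₂]; exact Finset.subset_union_left
      have hG₂sub : G₂.nodes ⊆ G'.nodes := by rw [hn₂]; exact Finset.subset_union_right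
      have hd₁'' : G''.nodes ∩ G₁.nodes = ∅ := finset_disj_of_subset hG''sub hd₁
      have hd₂₁ : G₂.nodes ∩ G₁.nodes = ∅ := finset_disj_of_subset hG₂sub hd₁
      have hin : (G''.nodes ∪ G₁.nodes) ∩ G₂.nodes = ∅ := by
        rw [Finset.eq_empty_iff_forall_notMem]
        intro z hz
        rcases Finset.mem_inter.1 hz with ⟨h1, h2⟩
        rcases Finset.mem_union.1 h1 with h1 | h1
        · exact disj_not_mem hd₂ h1 h2
        · exact disj_not_mem hd₂₁ h2 h1
      refine (h''.antSeq h₁ hd₁'').antSeq' h₂ hin ?_ ?_ ?_ ?_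
      · rw [hn₁, hn₂]
        ext z; simp only [Finset.mem_union]; tauto
      · rw [ha₁, ha₂]
        ext z; simp only [Finset.mem_insert, Finset.mem_union]; tauto
      · exact add_right_comm Λ'' Λ₂ Λ₁
      · exact add_right_comm Θ'' Θ₂ Θ₁

theorem labof_swap_suc {a b Γ Δ x G Λ Θ} (h : LabOf Γ (a :: b :: Δ) x G Λ Θ) :
    LabOf Γ (b :: a :: Δ) x G Λ Θ := by
  rcases h.sucInv' rfl with ⟨A, Θ', rfl, rfl, h'⟩ | ⟨Γ₁, Δ₁, y₁, G', G₁, Λ', Λ₁, Θ', Θ₁,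
      rfl, h', h₁, hd₁, hn₁, ha₁, rfl, rfl⟩
  · rcases h'.sucInv' rfl with ⟨B, Θ'', rfl, rfl, h''⟩ | ⟨Γ₂, Δ₂, y₂, G'', G₂, Λ'', Λ₂,
        Θ'', Θ₂, rfl, h'', h₂, hd₂, hn₂, ha₂, rfl, rfl⟩
    · exact (((h''.sucFm A).sucFm B)).cast rfl rfl (Multiset.cons_swap _ _ _)
    · exact (h''.sucFm A).sucSeq' h₂ hd₂ hn₂ ha₂ rfl (by rw [Multiset.cons_add])
  · rcases h'.sucInv' rfl with ⟨B, Θ'', rfl, rfl, h''⟩ | ⟨Γ₂, Δ₂, y₂, G'', G₂, Λ'', Λ₂,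
        Θ'', Θ₂, rfl, h'', h₂, hd₂, hn₂, ha₂, rfl, rfl⟩
    · refine (h''.sucSeq' h₁ ?_ ?_ ?_ rfl rfl).sucFm B |>.cast rfl rfl ?_
      · exact hd₁
      · exact hn₁
      · exact ha₁
      · rw [Multiset.cons_add]
    · have hG''sub : G''.nodes ⊆ G'.nodes := by rw [hn₂]; exact Finset.subset_union_left
      have hG₂sub : G₂.nodes ⊆ G'.nodes := by rw [hn₂]; exact Finset.subset_union_right
      have hd₁'' : G''.nodes ∩ G₁.nodes = ∅ := finset_disj_of_subset hG''sub hd₁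
      have hd₂₁ : G₂.nodes ∩ G₁.nodes = ∅ := finset_disj_of_subset hG₂sub hd₁
      have hin : (G''.nodes ∪ G₁.nodes) ∩ G₂.nodes = ∅ := by
        rw [Finset.eq_empty_iff_forall_notMem]
        intro z hz
        rcases Finset.mem_inter.1 hz with ⟨h1, h2⟩
        rcases Finset.mem_union.1 h1 with h1 | h1
        · exact disj_not_mem hd₂ h1 h2
        · exact disj_not_mem hd₂₁ h2 h1
      refine (h''.sucSeq h₁ hd₁'').sucSeq' h₂ hin ?_ ?_ ?_ ?_
      · rw [hn₁, hn₂]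
        ext z; simp only [Finset.mem_union]; tauto
      · rw [ha₁, ha₂]
        ext z; simp only [Finset.mem_insert, Finset.mem_union]; tauto
      · exact add_right_comm Λ'' Λ₂ Λ₁
      · exact add_right_comm Θ'' Θ₂ Θ₁

/-- motive for `NEq` in the mutual induction -/
def MN (a b : NForm) : Prop :=
  (∀ Γ Δ x G Λ Θ, LabOf (b :: Γ) Δ x G Λ Θ → LabOf (a :: Γ) Δ x G Λ Θ) ∧
  (∀ Γ Δ x G Λ Θ, LabOf Γ (b :: Δ) x G Λ Θ → LabOf Γ (a :: Δ) x G Λ Θ)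

/-- motive for `CEq` in the mutual induction -/
def MC (Γ Γ' : List NForm) : Prop :=
  (∀ Δ x G Λ Θ, LabOf Γ' Δ x G Λ Θ → LabOf Γ Δ x G Λ Θ) ∧
  (∀ Γa x G Λ Θ, LabOf Γa Γ' x G Λ Θ → LabOf Γa Γ x G Λ Θ)

theorem ceq_labof {Γ Γ'} (h : CEq Γ Γ') : MC Γ Γ' := by
  refine CEq.rec (motive_1 := fun a b _ => MN a b) (motive_2 := fun Γ Γ' _ => MC Γ Γ')
    ?_ ?_ ?_ ?_ ?_ ?_ h
  · -- NEq.fm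
    intro A
    exact ⟨fun _ _ _ _ _ _ h => h, fun _ _ _ _ _ _ h => h⟩
  · -- NEq.seq
    rintro Γi Γi' Δi Δi' hΓ hΔ ihΓ ihΔ
    constructor
    · intro Γ Δ x G Λ Θ h
      rcases h.antInv' rfl with ⟨A, Λ', he, _, _⟩ | ⟨Γ₀, Δ₀, y, G', G₀, Λ', Λ₀, Θ', Θ₀,
          he, h', h₀, hd, hn, ha, rfl, rfl⟩
      · cases he
      · cases he
        exact h'.antSeq' (ihΔ.2 _ _ _ _ _ (ihΓ.1 _ _ _ _ _ h₀)) hd hn ha rfl rfl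
    · intro Γ Δ x G Λ Θ h
      rcases h.sucInv' rfl with ⟨A, Θ', he, _, _⟩ | ⟨Γ₀, Δ₀, y, G', G₀, Λ', Λ₀, Θ', Θ₀,
          he, h', h₀, hd, hn, ha, rfl, rfl⟩
      · cases he
      · cases he
        exact h'.sucSeq' (ihΔ.2 _ _ _ _ _ (ihΓ.1 _ _ _ _ _ h₀)) hd hn ha rfl rfl
  · -- CEq.nil
    exact ⟨fun _ _ _ _ _ h => h, fun _ _ _ _ _ h => h⟩
  · -- CEq.cons
    rintro a b Γc Γc' hab hcc ihab ihcc
    constructor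
    · intro Δ x G Λ Θ h
      have h1 := ihab.1 _ _ _ _ _ _ h
      rcases h1.antInv' rfl with ⟨A, Λ', rfl, rfl, h'⟩ | ⟨Γ₀, Δ₀, y, G', G₀, Λ', Λ₀, Θ',
          Θ₀, rfl, h', h₀, hd, hn, ha, rfl, rfl⟩
      · exact (ihcc.1 _ _ _ _ _ h').antFm A
      · exact (ihcc.1 _ _ _ _ _ h').antSeq' h₀ hd hn ha rfl rfl
    · intro Γa x G Λ Θ h
      have h1 := ihab.2 _ _ _ _ _ _ h
      rcases h1.sucInv' rfl with ⟨A, Θ', rfl, rfl, h'⟩ | ⟨Γ₀, Δ₀, y, G', G₀, Λ', Λ₀, Θ',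
          Θ₀, rfl, h', h₀, hd, hn, ha, rfl, rfl⟩
      · exact (ihcc.2 _ _ _ _ _ h').sucFm A
      · exact (ihcc.2 _ _ _ _ _ h').sucSeq' h₀ hd hn ha rfl rfl
  · -- CEq.swap
    intro a b Γc
    exact ⟨fun _ _ _ _ _ h => labof_swap_ant h, fun _ _ _ _ _ h => labof_swap_suc h⟩
  · -- CEq.trans
    rintro Γ1 Γ2 Γ3 h12 h23 ih12 ih23
    exact ⟨fun _ _ _ _ _ h => ih12.1 _ _ _ _ _ (ih23.1 _ _ _ _ _ h),
           fun _ _ _ _ _ h => ih12.2 _ _ _ _ _ (ih23.2 _ _ _ _ _ h)⟩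

end CEqInv
section Exists

theorem labof_exists_aux : ∀ n : ℕ, ∀ Γ Δ : List NForm, ∀ x : ℕ,
    sizeOf Γ + sizeOf Δ = n →
    ∃ G Λ Θ N, LabOf Γ Δ x G Λ Θ ∧ x < N ∧ ∀ z ∈ G.nodes, x ≤ z ∧ z < N := by
  intro n
  induction n using Nat.strong_induction_on with
  | _ n ih =>
    intro Γ Δ x hs
    match Γ, Δ with
    | [], [] =>
      exact ⟨⟨{x}, ∅⟩, 0, 0, x + 1, LabOf.nil x, by omega, by simp; all_goals omega⟩
    | [], .fm A :: Δ' =>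
      obtain ⟨G, Λ, Θ, N, h, hN, hb⟩ := ih (sizeOf ([] : List NForm) + sizeOf Δ')
        (by subst hs; simp; all_goals omega) [] Δ' x rfl
      exact ⟨G, Λ, (x, A) ::ₘ Θ, N, h.sucFm A, hN, hb⟩
    | [], .seq Γ₀ Δ₀ :: Δ' =>
      obtain ⟨G, Λ, Θ, N, h, hN, hb⟩ := ih (sizeOf ([] : List NForm) + sizeOf Δ')
        (by subst hs; simp; all_goals omega) [] Δ' x rfl
      obtain ⟨G₀, Λ₀, Θ₀, N₀, h₀, hN₀, hb₀⟩ := ih (sizeOf Γ₀ + sizeOf Δ₀)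
        (by subst hs; simp; all_goals omega) Γ₀ Δ₀ N rfl
      have hd : G.nodes ∩ G₀.nodes = ∅ := by
        rw [Finset.eq_empty_iff_forall_notMem]
        intro z hz
        rcases Finset.mem_inter.1 hz with ⟨h1, h2⟩
        have := hb z h1; have := hb₀ z h2; omega
      refine ⟨_, _, _, N₀, h.sucSeq h₀ hd, by omega, ?_⟩
      intro z hz
      rcases Finset.mem_union.1 hz with hz | hz
      · have := hb z hz; omega
      · have := hb₀ z hz; omega
    | .fm A :: Γ', Δ =>
      obtain ⟨G, Λ, Θ, N, h, hN, hb⟩ := ih (sizeOf Γ' + sizeOf Δ)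
        (by subst hs; simp; all_goals omega) Γ' Δ x rfl
      exact ⟨G, (x, A) ::ₘ Λ, Θ, N, h.antFm A, hN, hb⟩
    | .seq Γ₀ Δ₀ :: Γ', Δ =>
      obtain ⟨G, Λ, Θ, N, h, hN, hb⟩ := ih (sizeOf Γ' + sizeOf Δ)
        (by subst hs; simp; all_goals omega) Γ' Δ x rfl
      obtain ⟨G₀, Λ₀, Θ₀, N₀, h₀, hN₀, hb₀⟩ := ih (sizeOf Γ₀ + sizeOf Δ₀)
        (by subst hs; simp; all_goals omega) Γ₀ Δ₀ N rfl
      have hd : G.nodes ∩ G₀.nodes = ∅ := by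
        rw [Finset.eq_empty_iff_forall_notMem]
        intro z hz
        rcases Finset.mem_inter.1 hz with ⟨h1, h2⟩
        have := hb z h1; have := hb₀ z h2; omega
      refine ⟨_, _, _, N₀, h.antSeq h₀ hd, by omega, ?_⟩
      intro z hz
      rcases Finset.mem_union.1 hz with hz | hz
      · have := hb z hz; omega
      · have := hb₀ z hz; omega

theorem labof_exists (Γ Δ : List NForm) (x : ℕ) : ∃ G Λ Θ, LabOf Γ Δ x G Λ Θ := by
  obtain ⟨G, Λ, Θ, N, h, _⟩ := labof_exists_aux (sizeOf Γ + sizeOf Δ) Γ Δ x rfl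
  exact ⟨G, Λ, Θ, h⟩

end Exists
section LHelp

theorem LDeriv.weakL_many {b : Bool} {G : LGraph} {Θ : LCtx} (Λ' : LCtx) : ∀ {Λ},
    LDeriv b G Λ Θ → (∀ a ∈ Λ', a.1 ∈ G.nodes) → LDeriv b G (Λ' + Λ) Θ := by
  induction Λ' using Multiset.induction_on with
  | empty => intro Λ h _; simpa using h
  | cons a s ih =>
    intro Λ h hw
    have h2 := LDeriv.weakL a.1 a.2 (hw a (by simp)) (ih h (fun c hc => hw c (by simp [hc])))
    exact h2.cast rfl (by rw [Multiset.cons_add]) rfl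

theorem LDeriv.weakR_many {b : Bool} {G : LGraph} {Λ : LCtx} (Θ' : LCtx) : ∀ {Θ},
    LDeriv b G Λ Θ → (∀ a ∈ Θ', a.1 ∈ G.nodes) → LDeriv b G Λ (Θ' + Θ) := by
  induction Θ' using Multiset.induction_on with
  | empty => intro Θ h _; simpa using h
  | cons a s ih =>
    intro Θ h hw
    have h2 := LDeriv.weakR a.1 a.2 (hw a (by simp)) (ih h (fun c hc => hw c (by simp [hc])))
    exact h2.cast rfl rfl (by rw [Multiset.cons_add])

/-- add a fresh leaf `z` with an arc `(y, z)` from the existing node `y` -/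
theorem LDeriv.addLeafIn {b G Λ Θ} (y z : ℕ) (hy : y ∈ G.nodes) (hz : z ∉ G.nodes)
    (h : LDeriv b G Λ Θ) : LDeriv b ⟨insert z G.nodes, insert (y, z) G.arcs⟩ Λ Θ := by
  have hd : G.nodes ∩ ({z} : Finset ℕ) = ∅ := by
    rw [Finset.eq_empty_iff_forall_notMem]
    intro a ha
    rcases Finset.mem_inter.1 ha with ⟨h1, h2⟩
    rw [Finset.mem_singleton] at h2
    exact hz (h2 ▸ h1)
  have hpre : LDeriv b ⟨G.nodes ∪ (LGraph.ren ⟨{z}, ∅⟩ z y).nodes,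
      G.arcs ∪ (LGraph.ren ⟨{z}, ∅⟩ z y).arcs⟩ Λ Θ := by
    refine h.cast (LGraph.ext' ?_ ?_) rfl rfl
    · show G.nodes = G.nodes ∪ Finset.image _ {z}
      rw [Finset.image_singleton]
      simp only [if_pos rfl]
      ext a
      simp only [Finset.mem_union, Finset.mem_singleton]
      constructor
      · exact Or.inl
      · rintro (h | rfl)
        · exact h
        · exact hy
    · show G.arcs = G.arcs ∪ Finset.image _ ∅
      simp
  have := LDeriv.nodesplitU G ⟨{z}, ∅⟩ z y hy (by simp) hd (by simp) hpre
  refine this.cast (LGraph.ext' ?_ ?_) rfl rfl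
  · show G.nodes ∪ {z} = insert z G.nodes
    ext a; simp [or_comm]
  · show insert (y, z) (G.arcs ∪ ∅) = _
    simp

/-- add a fresh leaf `z` with an arc `(z, y)` to the existing node `y` -/
theorem LDeriv.addLeafOut {b G Λ Θ} (y z : ℕ) (hy : y ∈ G.nodes) (hz : z ∉ G.nodes)
    (h : LDeriv b G Λ Θ) : LDeriv b ⟨insert z G.nodes, insert (z, y) G.arcs⟩ Λ Θ := by
  have hd : ({z} : Finset ℕ) ∩ G.nodes = ∅ := by
    rw [Finset.eq_empty_iff_forall_notMem]
    intro a ha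
    rcases Finset.mem_inter.1 ha with ⟨h2, h1⟩
    rw [Finset.mem_singleton] at h2
    exact hz (h2 ▸ h1)
  have hpre : LDeriv b ⟨(LGraph.ren ⟨{z}, ∅⟩ z y).nodes ∪ G.nodes,
      (LGraph.ren ⟨{z}, ∅⟩ z y).arcs ∪ G.arcs⟩ Λ Θ := by
    refine h.cast (LGraph.ext' ?_ ?_) rfl rfl
    · show G.nodes = Finset.image _ {z} ∪ G.nodes
      rw [Finset.image_singleton]
      simp only [if_pos rfl]
      ext a
      simp only [Finset.mem_union, Finset.mem_singleton]
      constructor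
      · exact Or.inr
      · rintro (rfl | h)
        · exact hy
        · exact h
    · show G.arcs = Finset.image _ ∅ ∪ G.arcs
      simp
  have := LDeriv.nodesplitD ⟨{z}, ∅⟩ G z y (by simp) hy hd (by simp) hpre
  refine this.cast (LGraph.ext' ?_ ?_) rfl rfl
  · show {z} ∪ G.nodes = insert z G.nodes
    ext a; simp
  · show insert (z, y) (∅ ∪ G.arcs) = _
    simp

set_option maxHeartbeats 1000000 in
/-- glue a translation graph onto a derivation along its root -/
theorem LDeriv.glue {Γ' Δ' x' G' Λg Θg} (hl : LabOf Γ' Δ' x' G' Λg Θg) :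
    ∀ {b : Bool} {H : LGraph} {Λ Θ : LCtx}, LDeriv b H Λ Θ → x' ∈ H.nodes →
    (∀ z ∈ G'.nodes, z ≠ x' → z ∉ H.nodes) →
    LDeriv b ⟨H.nodes ∪ G'.nodes, H.arcs ∪ G'.arcs⟩ Λ Θ := by
  induction hl with
  | nil =>
    intro b H Λ Θ h hx _
    refine h.cast (LGraph.ext' ?_ ?_) rfl rfl
    · show H.nodes = H.nodes ∪ {_}
      ext a
      simp only [Finset.mem_union, Finset.mem_singleton]
      constructor
      · exact Or.inl
      · rintro (h | rfl)
        · exact h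
        · exact hx
    · simp
  | antFm A h ih => exact ih
  | sucFm A h ih => exact ih
  | @antSeq Γi Δi xi Gi Λi Θi Γ₀ Δ₀ y₀ G₀ Λ₀ Θ₀ hi h₀ hd ih ih₀ =>
    intro b H Λ Θ h hx hfresh
    have hy₀Gi : y₀ ∉ Gi.nodes := by
      intro hc
      exact disj_not_mem hd hc h₀.root_mem
    have hxGi : xi ∈ Gi.nodes := hi.root_mem
    have hy₀x : y₀ ≠ xi := fun he => hy₀Gi (he ▸ hxGi)
    have D1 := ih h hx (fun z hz hzx => hfresh z (Finset.mem_union_left _ hz) hzx)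
    have hy₀H1 : y₀ ∉ H.nodes ∪ Gi.nodes := by
      intro hc
      rcases Finset.mem_union.1 hc with hc | hc
      · exact hfresh y₀ (Finset.mem_union_right _ h₀.root_mem) hy₀x hc
      · exact hy₀Gi hc
    have D2 := D1.addLeafOut xi y₀ (Finset.mem_union_right _ hxGi) hy₀H1
    have D3 := ih₀ D2 (by simp) (fun z hz hzy => by
      simp only [Finset.mem_insert, Finset.mem_union, not_or]
      refine ⟨hzy, ?_, fun hc => disj_not_mem hd hc hz⟩
      intro hc
      exact hfresh z (Finset.mem_union_right _ hz)
        (fun he => disj_not_mem hd (he ▸ hxGi) hz) hc)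
    refine D3.cast (LGraph.ext' ?_ ?_) rfl rfl
    · show insert y₀ (H.nodes ∪ Gi.nodes) ∪ G₀.nodes = _
      have : y₀ ∈ G₀.nodes := h₀.root_mem
      ext a
      simp only [Finset.mem_insert, Finset.mem_union]
      constructor
      · rintro ((rfl | h) | h)
        · exact Or.inr (Or.inr this)
        · tauto
        · tauto
      · rintro (h | h | h) <;> tauto
    · show insert (y₀, xi) (H.arcs ∪ Gi.arcs) ∪ G₀.arcs = _
      ext a
      simp only [Finset.mem_insert, Finset.mem_union]
      tauto
  | @sucSeq Γi Δi xi Gi Λi Θi Γ₀ Δ₀ y₀ G₀ Λ₀ Θ₀ hi h₀ hd ih ih₀ =>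
    intro b H Λ Θ h hx hfresh
    have hy₀Gi : y₀ ∉ Gi.nodes := by
      intro hc
      exact disj_not_mem hd hc h₀.root_mem
    have hxGi : xi ∈ Gi.nodes := hi.root_mem
    have hy₀x : y₀ ≠ xi := fun he => hy₀Gi (he ▸ hxGi)
    have D1 := ih h hx (fun z hz hzx => hfresh z (Finset.mem_union_left _ hz) hzx)
    have hy₀H1 : y₀ ∉ H.nodes ∪ Gi.nodes := by
      intro hc
      rcases Finset.mem_union.1 hc with hc | hc
      · exact hfresh y₀ (Finset.mem_union_right _ h₀.root_mem) hy₀x hc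
      · exact hy₀Gi hc
    have D2 := D1.addLeafIn xi y₀ (Finset.mem_union_right _ hxGi) hy₀H1
    have D3 := ih₀ D2 (by simp) (fun z hz hzy => by
      simp only [Finset.mem_insert, Finset.mem_union, not_or]
      refine ⟨hzy, ?_, fun hc => disj_not_mem hd hc hz⟩
      intro hc
      exact hfresh z (Finset.mem_union_right _ hz)
        (fun he => disj_not_mem hd (he ▸ hxGi) hz) hc)
    refine D3.cast (LGraph.ext' ?_ ?_) rfl rfl
    · show insert y₀ (H.nodes ∪ Gi.nodes) ∪ G₀.nodes = _
      have : y₀ ∈ G₀.nodes := h₀.root_mem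
      ext a
      simp only [Finset.mem_insert, Finset.mem_union]
      constructor
      · rintro ((rfl | h) | h)
        · exact Or.inr (Or.inr this)
        · tauto
        · tauto
      · rintro (h | h | h) <;> tauto
    · show insert (xi, y₀) (H.arcs ∪ Gi.arcs) ∪ G₀.arcs = _
      ext a
      simp only [Finset.mem_insert, Finset.mem_union]
      tauto

/-- transfer antecedent labelled formulas down an arc `(x,y)` using `monot L` -/
theorem LDeriv.transferL {b : Bool} {G : LGraph} (x y : ℕ) (harc : (x, y) ∈ G.arcs)
    (hx : x ∈ G.nodes) (Λ₀ : LCtx) : ∀ {Λ' Θ : LCtx},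
    LDeriv b G (renC Λ₀ x y + Λ') Θ → LDeriv b G (Λ₀ + Λ') Θ := by
  induction Λ₀ using Multiset.induction_on with
  | empty => intro Λ' Θ h; simpa [renC] using h
  | cons a s ih =>
    intro Λ' Θ h
    obtain ⟨z, C⟩ := a
    rw [renC_cons, Multiset.cons_add] at h
    by_cases hz : z = x
    · subst hz
      rw [if_pos rfl] at h
      have h2 := LDeriv.weakL z C hx h
      have h3 : LDeriv b G (renC s z y + ((z, C) ::ₘ (y, C) ::ₘ Λ')) Θ :=
        h2.cast rfl (by rw [Multiset.add_cons, Multiset.add_cons]) rfl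
      have h4 := ih h3
      have h5 : LDeriv b G ((z, C) ::ₘ (y, C) ::ₘ (s + Λ')) Θ :=
        h4.cast rfl (by rw [Multiset.add_cons, Multiset.add_cons]) rfl
      exact (LDeriv.monotL z y harc h5).cast rfl (by rw [Multiset.cons_add]) rfl
    · rw [if_neg hz] at h
      have h3 : LDeriv b G (renC s x y + ((z, C) ::ₘ Λ')) Θ :=
        h.cast rfl (by rw [Multiset.add_cons]) rfl
      exact (ih h3).cast rfl (by rw [Multiset.add_cons, Multiset.cons_add]) rfl

/-- transfer succedent labelled formulas up an arc `(y,x)` using `monot R` -/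
theorem LDeriv.transferR {b : Bool} {G : LGraph} (x y : ℕ) (harc : (y, x) ∈ G.arcs)
    (hx : x ∈ G.nodes) (Θ₀ : LCtx) : ∀ {Θ' Λ : LCtx},
    LDeriv b G Λ (renC Θ₀ x y + Θ') → LDeriv b G Λ (Θ₀ + Θ') := by
  induction Θ₀ using Multiset.induction_on with
  | empty => intro Θ' Λ h; simpa [renC] using h
  | cons a s ih =>
    intro Θ' Λ h
    obtain ⟨z, C⟩ := a
    rw [renC_cons, Multiset.cons_add] at h
    by_cases hz : z = x
    · subst hz
      rw [if_pos rfl] at h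
      have h2 := LDeriv.weakR z C hx h
      have h3 : LDeriv b G Λ (renC s z y + ((z, C) ::ₘ (y, C) ::ₘ Θ')) :=
        h2.cast rfl rfl (by rw [Multiset.add_cons, Multiset.add_cons])
      have h4 := ih h3
      have h5 : LDeriv b G Λ ((y, C) ::ₘ (z, C) ::ₘ (s + Θ')) :=
        h4.cast rfl rfl (by rw [Multiset.add_cons, Multiset.add_cons,
          Multiset.cons_swap])
      exact (LDeriv.monotR z y harc h5).cast rfl rfl (by rw [Multiset.cons_add])
    · rw [if_neg hz] at h
      have h3 : LDeriv b G Λ (renC s x y + ((z, C) ::ₘ Θ')) :=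
        h.cast rfl rfl (by rw [Multiset.add_cons])
      exact (ih h3).cast rfl rfl (by rw [Multiset.add_cons, Multiset.cons_add])

end LHelp
section Main

theorem labof_ant_ne_root' {Γ Δ x G Λ Θ} (h : LabOf Γ Δ x G Λ Θ) (hΓ : Γ = []) :
    ∀ a ∈ Λ, a.1 ≠ x := by
  induction h with
  | nil => simp
  | antFm => simp at hΓ
  | sucFm _ _ ih => exact ih hΓ
  | antSeq => simp at hΓ
  | sucSeq h h₀ hd ih _ =>
    intro a ha
    rcases Multiset.mem_add.1 ha with ha | ha
    · exact ih hΓ a ha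
    · exact fun he => disj_not_mem hd h.root_mem (he ▸ h₀.wf.1 a ha)

theorem labof_suc_ne_root' {Γ Δ x G Λ Θ} (h : LabOf Γ Δ x G Λ Θ) (hΔ : Δ = []) :
    ∀ a ∈ Θ, a.1 ≠ x := by
  induction h with
  | nil => simp
  | sucFm => simp at hΔ
  | antFm _ _ ih => exact ih hΔ
  | sucSeq => simp at hΔ
  | antSeq h h₀ hd ih _ =>
    intro a ha
    rcases Multiset.mem_add.1 ha with ha | ha
    · exact ih hΔ a ha
    · exact fun he => disj_not_mem hd h.root_mem (he ▸ h₀.wf.2 a ha)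

theorem LabOf.split2 {Γ Δ x G Λ Θ} (h : LabOf Γ Δ x G Λ Θ) :
    ∃ G₁ Λ₁ Θ₁ G₂ Λ₂ Θ₂, LabOf Γ [] x G₁ Λ₁ Θ₁ ∧ LabOf [] Δ x G₂ Λ₂ Θ₂ ∧
      G₁.nodes ∩ G₂.nodes ⊆ {x} ∧ G.nodes = G₁.nodes ∪ G₂.nodes ∧
      G.arcs = G₁.arcs ∪ G₂.arcs ∧ Λ = Λ₁ + Λ₂ ∧ Θ = Θ₁ + Θ₂ :=
  LabOf.split (Γ₁ := Γ) (Δ₁ := []) (Γ₂ := []) (Δ₂ := Δ) (by simpa using h)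

set_option maxHeartbeats 4000000 in
theorem nd_to_lderiv {b : Bool} {Γ Δ : List NForm} (h : ND b Γ Δ) :
    ∀ x G Λ Θ, LabOf Γ Δ x G Λ Θ → LDeriv b G Λ Θ := by
  induction h with
  | @exch b Γ Γ' Δ Δ' hΓ hΔ hnd ih =>
    intro x G Λ Θ h
    exact ih x G Λ Θ ((ceq_labof hΔ).2 _ _ _ _ _ ((ceq_labof hΓ).1 _ _ _ _ _ h))
  | hyp b A Γ Δ =>
    intro x G Λ Θ h
    obtain ⟨Λ', rfl, h1⟩ := h.antFmInv
    obtain ⟨Θ', rfl, h2⟩ := h1.sucFmInv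
    exact LDeriv.hyp b x A h2.wf h2.root_mem
  | @cut Γ Δ A hl hr ihl ihr =>
    intro x G Λ Θ h
    exact LDeriv.cut x A h.root_mem (ihl x _ _ _ (h.sucFm A)) (ihr x _ _ _ (h.antFm A))
  | @weakL b Γ Δ A hnd ih =>
    intro x G Λ Θ h
    obtain ⟨Λ', rfl, h1⟩ := h.antFmInv
    exact LDeriv.weakL x A h1.root_mem (ih x _ _ _ h1)
  | @weakR b Γ Δ A hnd ih =>
    intro x G Λ Θ h
    obtain ⟨Θ', rfl, h1⟩ := h.sucFmInv
    exact LDeriv.weakR x A h1.root_mem (ih x _ _ _ h1)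
  | @contrL b Γ Δ A hnd ih =>
    intro x G Λ Θ h
    obtain ⟨Λ', rfl, h1⟩ := h.antFmInv
    exact LDeriv.contrL (ih x _ _ _ ((h1.antFm A).antFm A))
  | @contrR b Γ Δ A hnd ih =>
    intro x G Λ Θ h
    obtain ⟨Θ', rfl, h1⟩ := h.sucFmInv
    exact LDeriv.contrR (ih x _ _ _ ((h1.sucFm A).sucFm A))
  | @topL b Γ Δ hnd ih =>
    intro x G Λ Θ h
    obtain ⟨Λ', rfl, h1⟩ := h.antFmInv
    exact LDeriv.topL h1.root_mem (ih x _ _ _ h1)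
  | topR b Γ Δ =>
    intro x G Λ Θ h
    obtain ⟨Θ', rfl, h1⟩ := h.sucFmInv
    exact LDeriv.topR b x h1.wf h1.root_mem
  | botL b Γ Δ =>
    intro x G Λ Θ h
    obtain ⟨Λ', rfl, h1⟩ := h.antFmInv
    exact LDeriv.botL b x h1.wf h1.root_mem
  | @botR b Γ Δ hnd ih =>
    intro x G Λ Θ h
    obtain ⟨Θ', rfl, h1⟩ := h.sucFmInv
    exact LDeriv.botR h1.root_mem (ih x _ _ _ h1)
  | @andL b Γ Δ A B hnd ih =>
    intro x G Λ Θ h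
    obtain ⟨Λ', rfl, h1⟩ := h.antFmInv
    exact LDeriv.andL (ih x _ _ _ ((h1.antFm B).antFm A))
  | @andR b Γ Δ A B hnd1 hnd2 ih1 ih2 =>
    intro x G Λ Θ h
    obtain ⟨Θ', rfl, h1⟩ := h.sucFmInv
    exact LDeriv.andR (ih1 x _ _ _ (h1.sucFm A)) (ih2 x _ _ _ (h1.sucFm B))
  | @orL b Γ Δ A B hnd1 hnd2 ih1 ih2 =>
    intro x G Λ Θ h
    obtain ⟨Λ', rfl, h1⟩ := h.antFmInv
    exact LDeriv.orL (ih1 x _ _ _ (h1.antFm A)) (ih2 x _ _ _ (h1.antFm B))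
  | @orR b Γ Δ A B hnd ih =>
    intro x G Λ Θ h
    obtain ⟨Θ', rfl, h1⟩ := h.sucFmInv
    exact LDeriv.orR (ih x _ _ _ ((h1.sucFm B).sucFm A))
  | @impL b Γ Δ A B hnd1 hnd2 ih1 ih2 =>
    intro x G Λ Θ h
    obtain ⟨Λ', rfl, h1⟩ := h.antFmInv
    exact LDeriv.impL (ih1 x _ _ _ ((h1.sucFm A).antFm (.imp A B)))
      (ih2 x _ _ _ (h1.antFm B))
  | @exclR b Γ Δ A B hnd1 hnd2 ih1 ih2 =>
    intro x G Λ Θ h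
    obtain ⟨Θ', rfl, h1⟩ := h.sucFmInv
    exact LDeriv.exclR (ih1 x _ _ _ (h1.sucFm A))
      (ih2 x _ _ _ ((h1.antFm B).sucFm (.excl A B)))
  | @impR b Γ Δ A B hprem ih =>
    intro x G Λ Θ h
    obtain ⟨Θh, rfl, h1⟩ := h.sucFmInv
    obtain ⟨G₁, Λ₁, Θ₁, G₂, Λ₂, Θ₂, hp1, hp2, hsub, hn, ha, rfl, rfl⟩ := h1.split2
    obtain ⟨y, hy⟩ := Infinite.exists_notMem_finset G.nodes
    have hxG : x ∈ G.nodes := h1.root_mem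
    have hxG₁ : x ∈ G₁.nodes := hp1.root_mem
    have hxG₂ : x ∈ G₂.nodes := hp2.root_mem
    have hyG₁ : y ∉ G₁.nodes := fun hc => hy (by rw [hn]; exact Finset.mem_union_left _ hc)
    have hyG₂ : y ∉ G₂.nodes := fun hc => hy (by rw [hn]; exact Finset.mem_union_right _ hc)
    have hrr := hp1.reroot hyG₁
    have D0 := ih y _ _ _ ((hrr.sucFm B).antFm A)
    have hd1 : G₁.nodes ∩ ({y} : Finset ℕ) = ∅ := by
      rw [Finset.eq_empty_iff_forall_notMem]
      intro a ha'
      rcases Finset.mem_inter.1 ha' with ⟨c1, c2⟩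
      rw [Finset.mem_singleton] at c2
      exact hyG₁ (c2 ▸ c1)
    have hpre : LDeriv b ⟨(G₁.ren x y).nodes ∪ (⟨{y}, ∅⟩ : LGraph).nodes,
        (G₁.ren x y).arcs ∪ (⟨{y}, ∅⟩ : LGraph).arcs⟩
        ((y, A) ::ₘ renC Λ₁ x y) ((y, B) ::ₘ renC Θ₁ x y) := by
      refine D0.cast (LGraph.ext' ?_ ?_) rfl rfl
      · show (G₁.ren x y).nodes = (G₁.ren x y).nodes ∪ {y}
        have hym := root_mem_ren (G := G₁) (x := x) (y := y) hxG₁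
        ext a
        simp only [Finset.mem_union, Finset.mem_singleton]
        constructor
        · exact Or.inl
        · rintro (h' | rfl)
          · exact h'
          · exact hym
      · simp
    have D1 := LDeriv.nodesplitD G₁ ⟨{y}, ∅⟩ x y hxG₁ (by simp) hd1 (hp1.no_out' rfl) hpre
    have D2 := LDeriv.glue hp2 D1 (Finset.mem_union_left _ hxG₁) (by
      intro z hz hzx
      simp only [Finset.mem_union, Finset.mem_singleton, not_or]
      exact ⟨fun hc => hzx (Finset.mem_singleton.1 (hsub (Finset.mem_inter.2 ⟨hc, hz⟩))),
        fun hc => hyG₂ (hc ▸ hz)⟩)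
    have D3 : LDeriv b ⟨insert y G.nodes, insert (x, y) G.arcs⟩
        ((y, A) ::ₘ renC Λ₁ x y) ((y, B) ::ₘ renC Θ₁ x y) := by
      refine D2.cast (LGraph.ext' ?_ ?_) rfl rfl
      · show G₁.nodes ∪ {y} ∪ G₂.nodes = _
        rw [hn]
        ext a
        simp only [Finset.mem_union, Finset.mem_insert, Finset.mem_singleton]
        tauto
      · show insert (x, y) (G₁.arcs ∪ ∅) ∪ G₂.arcs = _
        rw [ha]
        ext a
        simp only [Finset.mem_union, Finset.mem_insert, Finset.notMem_empty, or_false]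
        tauto
    have hmemN : ∀ z ∈ G₂.nodes, z ∈ (insert y G.nodes : Finset ℕ) := fun z hz => by
      simp only [Finset.mem_insert]
      right
      rw [hn]
      exact Finset.mem_union_right _ hz
    have D4 := LDeriv.weakR_many Θ₂ (LDeriv.weakL_many Λ₂ D3
      (fun a ha' => hmemN _ (hp2.wf.1 a ha'))) (fun a ha' => hmemN _ (hp2.wf.2 a ha'))
    have D5 : LDeriv b ⟨insert y G.nodes, insert (x, y) G.arcs⟩
        (renC Λ₁ x y + ((y, A) ::ₘ Λ₂)) (Θ₂ + ((y, B) ::ₘ renC Θ₁ x y)) :=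
      D4.cast rfl (by simp only [← Multiset.singleton_add]; abel) rfl
    have D6 := LDeriv.transferL x y (Finset.mem_insert_self _ _)
      (Finset.mem_insert_of_mem hxG) Λ₁ D5
    have hΘ₁ : renC Θ₁ x y = Θ₁ := renC_id (labof_suc_ne_root' hp1 rfl) y
    have D7 : LDeriv b ⟨insert y G.nodes, insert (x, y) G.arcs⟩
        ((y, A) ::ₘ (Λ₁ + Λ₂)) ((y, B) ::ₘ (Θ₁ + Θ₂)) :=
      D6.cast rfl (by simp only [← Multiset.singleton_add]; abel)
        (by rw [hΘ₁]; simp only [← Multiset.singleton_add]; abel)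
    exact LDeriv.impR x y hxG hy D7
  | @exclL b Γ Δ A B hprem ih =>
    intro x G Λ Θ h
    obtain ⟨Λh, rfl, h1⟩ := h.antFmInv
    obtain ⟨G₁, Λ₁, Θ₁, G₂, Λ₂, Θ₂, hp1, hp2, hsub, hn, ha, rfl, rfl⟩ := h1.split2
    obtain ⟨y, hy⟩ := Infinite.exists_notMem_finset G.nodes
    have hxG : x ∈ G.nodes := h1.root_mem
    have hxG₁ : x ∈ G₁.nodes := hp1.root_mem
    have hxG₂ : x ∈ G₂.nodes := hp2.root_mem
    have hyG₁ : y ∉ G₁.nodes := fun hc => hy (by rw [hn]; exact Finset.mem_union_left _ hc)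
    have hyG₂ : y ∉ G₂.nodes := fun hc => hy (by rw [hn]; exact Finset.mem_union_right _ hc)
    have hrr := hp2.reroot hyG₂
    have D0 := ih y _ _ _ ((hrr.sucFm B).antFm A)
    have hd1 : ({y} : Finset ℕ) ∩ G₂.nodes = ∅ := by
      rw [Finset.eq_empty_iff_forall_notMem]
      intro a ha'
      rcases Finset.mem_inter.1 ha' with ⟨c2, c1⟩
      rw [Finset.mem_singleton] at c2
      exact hyG₂ (c2 ▸ c1)
    have hpre : LDeriv b ⟨(⟨{y}, ∅⟩ : LGraph).nodes ∪ (G₂.ren x y).nodes,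
        (⟨{y}, ∅⟩ : LGraph).arcs ∪ (G₂.ren x y).arcs⟩
        ((y, A) ::ₘ renC Λ₂ x y) ((y, B) ::ₘ renC Θ₂ x y) := by
      refine D0.cast (LGraph.ext' ?_ ?_) rfl rfl
      · show (G₂.ren x y).nodes = {y} ∪ (G₂.ren x y).nodes
        have hym := root_mem_ren (G := G₂) (x := x) (y := y) hxG₂
        ext a
        simp only [Finset.mem_union, Finset.mem_singleton]
        constructor
        · exact Or.inr
        · rintro (rfl | h')
          · exact hym
          · exact h'
      · simp
    have D1 := LDeriv.nodesplitU ⟨{y}, ∅⟩ G₂ x y (by simp) hxG₂ hd1 (hp2.no_in' rfl) hpre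
    have D2 := LDeriv.glue hp1 D1 (Finset.mem_union_right _ hxG₂) (by
      intro z hz hzx
      simp only [Finset.mem_union, Finset.mem_singleton, not_or]
      exact ⟨fun hc => hyG₁ (hc ▸ hz),
        fun hc => hzx (Finset.mem_singleton.1 (hsub (Finset.mem_inter.2 ⟨hz, hc⟩)))⟩)
    have D3 : LDeriv b ⟨insert y G.nodes, insert (y, x) G.arcs⟩
        ((y, A) ::ₘ renC Λ₂ x y) ((y, B) ::ₘ renC Θ₂ x y) := by
      refine D2.cast (LGraph.ext' ?_ ?_) rfl rfl
      · show {y} ∪ G₂.nodes ∪ G₁.nodes = _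
        rw [hn]
        ext a
        simp only [Finset.mem_union, Finset.mem_insert, Finset.mem_singleton]
        tauto
      · show insert (y, x) (∅ ∪ G₂.arcs) ∪ G₁.arcs = _
        rw [ha]
        ext a
        simp only [Finset.mem_union, Finset.mem_insert, Finset.notMem_empty, false_or]
        tauto
    have hmemN : ∀ z ∈ G₁.nodes, z ∈ (insert y G.nodes : Finset ℕ) := fun z hz => by
      simp only [Finset.mem_insert]
      right
      rw [hn]
      exact Finset.mem_union_left _ hz
    have D4 := LDeriv.weakR_many Θ₁ (LDeriv.weakL_many Λ₁ D3
      (fun a ha' => hmemN _ (hp1.wf.1 a ha'))) (fun a ha' => hmemN _ (hp1.wf.2 a ha'))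
    have hΛ₂ : renC Λ₂ x y = Λ₂ := renC_id (labof_ant_ne_root' hp2 rfl) y
    have D5 : LDeriv b ⟨insert y G.nodes, insert (y, x) G.arcs⟩
        ((y, A) ::ₘ (Λ₁ + Λ₂)) (renC Θ₂ x y + ((y, B) ::ₘ Θ₁)) :=
      D4.cast rfl (by rw [hΛ₂]; simp only [← Multiset.singleton_add]; abel)
        (by simp only [← Multiset.singleton_add]; abel)
    have D6 := LDeriv.transferR x y (Finset.mem_insert_self _ _)
      (Finset.mem_insert_of_mem hxG) Θ₂ D5
    have D7 : LDeriv b ⟨insert y G.nodes, insert (y, x) G.arcs⟩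
        ((y, A) ::ₘ (Λ₁ + Λ₂)) ((y, B) ::ₘ (Θ₁ + Θ₂)) :=
      D6.cast rfl rfl (by simp only [← Multiset.singleton_add]; abel)
    exact LDeriv.exclL x y hxG hy D7
  | @nestL b Γ Δ Γ₀ Δ₀ hprem ih =>
    intro x G Λ Θ h
    rcases h.antInv' rfl with ⟨A, Λ', he, _, _⟩ | ⟨Γ₀', Δ₀', y, Gr, G₀, Λr, Λ₀, Θr, Θ₀,
        he, hr, h₀, hd, hn, ha, rfl, rfl⟩
    · cases he
    cases he
    obtain ⟨G₁, Λ₁, Θ₁, G₂, Λ₂, Θ₂, hp1, hp2, hsub, hn2, ha2, rfl, rfl⟩ := hr.split2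
    have hyG₀ : y ∈ G₀.nodes := h₀.root_mem
    have hyGr : y ∉ Gr.nodes := fun hc => disj_not_mem hd hc hyG₀
    have hxG₂ : x ∈ G₂.nodes := hp2.root_mem
    have hxG₁ : x ∈ G₁.nodes := hp1.root_mem
    have hxG : x ∈ G.nodes := by
      rw [hn]
      exact Finset.mem_union_left _ hr.root_mem
    have hyG₂ : y ∉ G₂.nodes := fun hc => hyGr (by
      rw [hn2]; exact Finset.mem_union_right _ hc)
    have hrr := hp2.reroot hyG₂
    have hsub2 : G₀.nodes ∩ (G₂.ren x y).nodes ⊆ {y} := by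
      intro z hz
      rcases Finset.mem_inter.1 hz with ⟨h1, h2⟩
      rcases ren_nodes_subset h2 with rfl | ⟨h3, _⟩
      · exact Finset.mem_singleton_self _
      · exact absurd h1 (disj_not_mem hd (by rw [hn2]; exact Finset.mem_union_right _ h3))
    have hcomb := h₀.combine hrr hsub2
    have hcomb' : LabOf Γ₀ (Δ₀ ++ Δ) y ⟨G₀.nodes ∪ (G₂.ren x y).nodes,
        G₀.arcs ∪ (G₂.ren x y).arcs⟩ (Λ₀ + renC Λ₂ x y) (Θ₀ + renC Θ₂ x y) := by
      simpa using hcomb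
    have D0 := ih y _ _ _ hcomb'
    have hd02 : G₀.nodes ∩ G₂.nodes = ∅ := by
      rw [Finset.eq_empty_iff_forall_notMem]
      intro z hz
      rcases Finset.mem_inter.1 hz with ⟨h1, h2⟩
      exact disj_not_mem hd (by rw [hn2]; exact Finset.mem_union_right _ h2) h1
    have D1 := LDeriv.nodesplitU G₀ G₂ x y hyG₀ hxG₂ hd02 (hp2.no_in' rfl) D0
    have D2 := LDeriv.glue hp1 D1 (Finset.mem_union_right _ hxG₂) (by
      intro z hz hzx
      simp only [Finset.mem_union, not_or]
      constructor
      · exact fun hc => disj_not_mem hd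
          (by rw [hn2]; exact Finset.mem_union_left _ hz) hc
      · exact fun hc => hzx (Finset.mem_singleton.1 (hsub (Finset.mem_inter.2 ⟨hz, hc⟩))))
    have D3 : LDeriv b G (Λ₀ + renC Λ₂ x y) (Θ₀ + renC Θ₂ x y) := by
      refine D2.cast (LGraph.ext' ?_ ?_) rfl rfl
      · show G₀.nodes ∪ G₂.nodes ∪ G₁.nodes = _
        rw [hn, hn2]
        ext a
        simp only [Finset.mem_union]
        tauto
      · show insert (y, x) (G₀.arcs ∪ G₂.arcs) ∪ G₁.arcs = _
        rw [ha, ha2]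
        ext a
        simp only [Finset.mem_union, Finset.mem_insert]
        tauto
    have hmemN : ∀ z ∈ G₁.nodes, z ∈ G.nodes := fun z hz => by
      rw [hn, hn2]
      exact Finset.mem_union_left _ (Finset.mem_union_left _ hz)
    have D4 := LDeriv.weakR_many Θ₁ (LDeriv.weakL_many Λ₁ D3
      (fun a ha' => hmemN _ (hp1.wf.1 a ha'))) (fun a ha' => hmemN _ (hp1.wf.2 a ha'))
    have hΛ₂ : renC Λ₂ x y = Λ₂ := renC_id (labof_ant_ne_root' hp2 rfl) y
    have harc : (y, x) ∈ G.arcs := by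
      rw [ha]
      exact Finset.mem_insert_self _ _
    have D5 : LDeriv b G (Λ₁ + Λ₂ + Λ₀) (renC Θ₂ x y + (Θ₀ + Θ₁)) :=
      D4.cast rfl (by rw [hΛ₂]; abel) (by abel)
    have D6 := LDeriv.transferR x y harc hxG Θ₂ D5
    exact D6.cast rfl rfl (by abel)
  | @nestR b Γ Δ Γ₀ Δ₀ hprem ih =>
    intro x G Λ Θ h
    rcases h.sucInv' rfl with ⟨A, Θ', he, _, _⟩ | ⟨Γ₀', Δ₀', y, Gr, G₀, Λr, Λ₀, Θr, Θ₀,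
        he, hr, h₀, hd, hn, ha, rfl, rfl⟩
    · cases he
    cases he
    obtain ⟨G₁, Λ₁, Θ₁, G₂, Λ₂, Θ₂, hp1, hp2, hsub, hn2, ha2, rfl, rfl⟩ := hr.split2
    have hyG₀ : y ∈ G₀.nodes := h₀.root_mem
    have hyGr : y ∉ Gr.nodes := fun hc => disj_not_mem hd hc hyG₀
    have hxG₂ : x ∈ G₂.nodes := hp2.root_mem
    have hxG₁ : x ∈ G₁.nodes := hp1.root_mem
    have hxG : x ∈ G.nodes := by
      rw [hn]
      exact Finset.mem_union_left _ hr.root_mem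
    have hyG₁ : y ∉ G₁.nodes := fun hc => hyGr (by
      rw [hn2]; exact Finset.mem_union_left _ hc)
    have hrr := hp1.reroot hyG₁
    have hsub2 : (G₁.ren x y).nodes ∩ G₀.nodes ⊆ {y} := by
      intro z hz
      rcases Finset.mem_inter.1 hz with ⟨h2, h1⟩
      rcases ren_nodes_subset h2 with rfl | ⟨h3, _⟩
      · exact Finset.mem_singleton_self _
      · exact absurd h1 (disj_not_mem hd (by rw [hn2]; exact Finset.mem_union_left _ h3))
    have hcomb := hrr.combine h₀ hsub2
    have hcomb' : LabOf (Γ ++ Γ₀) Δ₀ y ⟨(G₁.ren x y).nodes ∪ G₀.nodes,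
        (G₁.ren x y).arcs ∪ G₀.arcs⟩ (renC Λ₁ x y + Λ₀) (renC Θ₁ x y + Θ₀) := by
      simpa using hcomb
    have D0 := ih y _ _ _ hcomb'
    have hd10 : G₁.nodes ∩ G₀.nodes = ∅ := by
      rw [Finset.eq_empty_iff_forall_notMem]
      intro z hz
      rcases Finset.mem_inter.1 hz with ⟨h1, h2⟩
      exact disj_not_mem hd (by rw [hn2]; exact Finset.mem_union_left _ h1) h2
    have D1 := LDeriv.nodesplitD G₁ G₀ x y hxG₁ hyG₀ hd10 (hp1.no_out' rfl) D0
    have D2 := LDeriv.glue hp2 D1 (Finset.mem_union_left _ hxG₁) (by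
      intro z hz hzx
      simp only [Finset.mem_union, not_or]
      constructor
      · exact fun hc => hzx (Finset.mem_singleton.1 (hsub (Finset.mem_inter.2 ⟨hc, hz⟩)))
      · exact fun hc => disj_not_mem hd
          (by rw [hn2]; exact Finset.mem_union_right _ hz) hc)
    have D3 : LDeriv b G (renC Λ₁ x y + Λ₀) (renC Θ₁ x y + Θ₀) := by
      refine D2.cast (LGraph.ext' ?_ ?_) rfl rfl
      · show G₁.nodes ∪ G₀.nodes ∪ G₂.nodes = _
        rw [hn, hn2]
        ext a
        simp only [Finset.mem_union]
        tauto
      · show insert (x, y) (G₁.arcs ∪ G₀.arcs) ∪ G₂.arcs = _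
        rw [ha, ha2]
        ext a
        simp only [Finset.mem_union, Finset.mem_insert]
        tauto
    have hmemN : ∀ z ∈ G₂.nodes, z ∈ G.nodes := fun z hz => by
      rw [hn, hn2]
      exact Finset.mem_union_left _ (Finset.mem_union_right _ hz)
    have D4 := LDeriv.weakR_many Θ₂ (LDeriv.weakL_many Λ₂ D3
      (fun a ha' => hmemN _ (hp2.wf.1 a ha'))) (fun a ha' => hmemN _ (hp2.wf.2 a ha'))
    have hΘ₁ : renC Θ₁ x y = Θ₁ := renC_id (labof_suc_ne_root' hp1 rfl) y
    have harc : (x, y) ∈ G.arcs := by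
      rw [ha]
      exact Finset.mem_insert_self _ _
    have D5 : LDeriv b G (renC Λ₁ x y + (Λ₀ + Λ₂)) (Θ₁ + Θ₂ + Θ₀) :=
      D4.cast rfl (by abel) (by rw [hΘ₁]; abel)
    have D6 := LDeriv.transferL x y harc hxG Λ₁ D5
    exact D6.cast rfl (by abel) rfl
  | @unnestL b Γ Δ Γ₀ Δ₀ hprem ih =>
    intro x G Λ Θ h
    obtain ⟨G₁, Λ₁, Θ₁, G₂, Λ₂, Θ₂, hp1, hp2, hsub, hn, ha, rfl, rfl⟩ :=
      LabOf.split (Γ₁ := Γ₀) (Δ₁ := Δ₀) (Γ₂ := Γ) (Δ₂ := Δ) h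
    obtain ⟨y, hy⟩ := Infinite.exists_notMem_finset G.nodes
    have hxG₁ : x ∈ G₁.nodes := hp1.root_mem
    have hxG₂ : x ∈ G₂.nodes := hp2.root_mem
    have hyG₁ : y ∉ G₁.nodes := fun hc => hy (by rw [hn]; exact Finset.mem_union_left _ hc)
    have hyG₂ : y ∉ G₂.nodes := fun hc => hy (by rw [hn]; exact Finset.mem_union_right _ hc)
    have h1y := hp1.reroot hyG₁
    have hdisj : G₂.nodes ∩ (G₁.ren x y).nodes = ∅ := by
      rw [Finset.eq_empty_iff_forall_notMem]
      intro z hz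
      rcases Finset.mem_inter.1 hz with ⟨h2, h1⟩
      rcases ren_nodes_subset h1 with rfl | ⟨h3, hne⟩
      · exact hyG₂ h2
      · exact hne (Finset.mem_singleton.1 (hsub (Finset.mem_inter.2 ⟨h3, h2⟩)))
    have hrep := hp2.antSeq h1y hdisj
    have D0 := ih x _ _ _ hrep
    have D0' : LDeriv b ⟨(G₁.ren x y).nodes ∪ G₂.nodes,
        insert (y, x) ((G₁.ren x y).arcs ∪ G₂.arcs)⟩ (Λ₂ + renC Λ₁ x y)
        (Θ₂ + renC Θ₁ x y) := by
      refine D0.cast (LGraph.ext' ?_ ?_) rfl rfl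
      · show G₂.nodes ∪ (G₁.ren x y).nodes = _
        ext a
        simp only [Finset.mem_union]
        tauto
      · show insert (y, x) (G₂.arcs ∪ (G₁.ren x y).arcs) = _
        ext a
        simp only [Finset.mem_insert, Finset.mem_union]
        tauto
    have hdisj' : (G₁.ren x y).nodes ∩ G₂.nodes = ∅ := by
      rw [Finset.inter_comm]
      exact hdisj
    have D1 := LDeriv.nodemergeD (G₁.ren x y) G₂ x y (root_mem_ren hxG₁) hxG₂ hdisj' D0'
    rw [ren_ren_cancel hp1.arcs_mem hyG₁] at D1
    have hl2 : renC Λ₂ y x = Λ₂ := renC_id (fun a ha' he => hyG₂ (by rw [← he]; exact hp2.wf.1 a ha')) x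
    have ht2 : renC Θ₂ y x = Θ₂ := renC_id (fun a ha' he => hyG₂ (by rw [← he]; exact hp2.wf.2 a ha')) x
    have hl1 : renC (renC Λ₁ x y) y x = Λ₁ :=
      renC_renC_cancel (fun a ha' he => hyG₁ (by rw [← he]; exact hp1.wf.1 a ha'))
    have ht1 : renC (renC Θ₁ x y) y x = Θ₁ :=
      renC_renC_cancel (fun a ha' he => hyG₁ (by rw [← he]; exact hp1.wf.2 a ha'))
    refine D1.cast (LGraph.ext' ?_ ?_) ?_ ?_
    · show G₁.nodes ∪ G₂.nodes = _
      exact hn.symm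
    · show G₁.arcs ∪ G₂.arcs = _
      exact ha.symm
    · rw [renC_add, hl2, hl1]
      exact add_comm _ _
    · rw [renC_add, ht2, ht1]
      exact add_comm _ _
  | @unnestR b Γ Δ Γ₀ Δ₀ hprem ih =>
    intro x G Λ Θ h
    obtain ⟨G₁, Λ₁, Θ₁, G₂, Λ₂, Θ₂, hp1, hp2, hsub, hn, ha, rfl, rfl⟩ :=
      LabOf.split (Γ₁ := Γ₀) (Δ₁ := Δ₀) (Γ₂ := Γ) (Δ₂ := Δ) h
    obtain ⟨y, hy⟩ := Infinite.exists_notMem_finset G.nodes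
    have hxG₁ : x ∈ G₁.nodes := hp1.root_mem
    have hxG₂ : x ∈ G₂.nodes := hp2.root_mem
    have hyG₁ : y ∉ G₁.nodes := fun hc => hy (by rw [hn]; exact Finset.mem_union_left _ hc)
    have hyG₂ : y ∉ G₂.nodes := fun hc => hy (by rw [hn]; exact Finset.mem_union_right _ hc)
    have h1y := hp1.reroot hyG₁
    have hdisj : G₂.nodes ∩ (G₁.ren x y).nodes = ∅ := by
      rw [Finset.eq_empty_iff_forall_notMem]
      intro z hz
      rcases Finset.mem_inter.1 hz with ⟨h2, h1⟩
      rcases ren_nodes_subset h1 with rfl | ⟨h3, hne⟩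
      · exact hyG₂ h2
      · exact hne (Finset.mem_singleton.1 (hsub (Finset.mem_inter.2 ⟨h3, h2⟩)))
    have hrep := hp2.sucSeq h1y hdisj
    have D0 := ih x _ _ _ hrep
    have D1 := LDeriv.nodemergeU G₂ (G₁.ren x y) x y hxG₂ (root_mem_ren hxG₁) hdisj D0
    rw [ren_ren_cancel hp1.arcs_mem hyG₁] at D1
    have hl2 : renC Λ₂ y x = Λ₂ := renC_id (fun a ha' he => hyG₂ (by rw [← he]; exact hp2.wf.1 a ha')) x
    have ht2 : renC Θ₂ y x = Θ₂ := renC_id (fun a ha' he => hyG₂ (by rw [← he]; exact hp2.wf.2 a ha')) x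
    have hl1 : renC (renC Λ₁ x y) y x = Λ₁ :=
      renC_renC_cancel (fun a ha' he => hyG₁ (by rw [← he]; exact hp1.wf.1 a ha'))
    have ht1 : renC (renC Θ₁ x y) y x = Θ₁ :=
      renC_renC_cancel (fun a ha' he => hyG₁ (by rw [← he]; exact hp1.wf.2 a ha'))
    refine D1.cast (LGraph.ext' ?_ ?_) ?_ ?_
    · show G₂.nodes ∪ G₁.nodes = _
      rw [hn]
      ext a
      simp only [Finset.mem_union]
      tauto
    · show G₂.arcs ∪ G₁.arcs = _
      rw [ha]
      ext a
      simp only [Finset.mem_union]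
      tauto
    · rw [renC_add, hl2, hl1]
      exact add_comm _ _
    · rw [renC_add, ht2, ht1]
      exact add_comm _ _

end Main

/-- if a nested sequent is derivable in N-LBiI then for any label x
the labelled sequent ℓ(Γ ⊢ Δ; x) (which exists) is derivable in L-LBiI -/
theorem nlbii_to_llbii (Γ Δ : List NForm) (h : ND true Γ Δ) (x : ℕ) :
    (∃ G Λ Θ, LabOf Γ Δ x G Λ Θ) ∧
      ∀ G Λ Θ, LabOf Γ Δ x G Λ Θ → LDeriv true G Λ Θ :=
  ⟨labof_exists Γ Δ x, fun G Λ Θ hl => nd_to_lderiv h x G Λ Θ hl⟩
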